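/- arXiv:1708.02372 — 4 statements merged into one kernel-verified Lean document; each statement's English description precedes it below -/
import Mathlib

section
/- Let n ≥ 3. Then for every smooth compactly supported function g : ℝⁿ → ℂ whose support does not contain the origin, one has ‖ g/|x| ‖_{L²(ℝⁿ)} ≤ (2/(n-2)) · ‖ (x/|x|)·∇g ‖_{L²(ℝⁿ)}, i.e. ((n-2)/2)² ∫_{ℝⁿ} |g(x)|²/|x|² dx ≤ ∫_{ℝⁿ} |(x/|x|)·∇g(x)|² dx. -/
open MeasureTheory Metric

private lemma lemA {n : ℕ} (f : EuclideanSpace ℝ (Fin n) → ℝ) (hf : ContDiff ℝ 1 f)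
    (hs : HasCompactSupport f) (v : EuclideanSpace ℝ (Fin n)) :
    ∫ x, fderiv ℝ f x v = 0 := by
  have hdf : Continuous (fderiv ℝ f) := hf.continuous_fderiv one_ne_zero
  have hdfs : HasCompactSupport (fderiv ℝ f) := hs.fderiv (𝕜 := ℝ)
  obtain ⟨C, hC⟩ := hdfs.exists_bound_of_continuous hdf
  set K' := Metric.cthickening ‖v‖ (tsupport f) with hK'
  have hK'c : IsCompact K' := hs.cthickening
  set bound : EuclideanSpace ℝ (Fin n) → ℝ := K'.indicator (fun _ => C * ‖v‖) with hbd
  have hbi : Integrable bound := by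
    rw [hbd, integrable_indicator_iff hK'c.isClosed.measurableSet]
    exact integrableOn_const hK'c.measure_lt_top.ne
  have key := hasDerivAt_integral_of_dominated_loc_of_deriv_le
      (F := fun (t : ℝ) x => f (x + t • v))
      (F' := fun (t : ℝ) x => fderiv ℝ f (x + t • v) v) (x₀ := (0:ℝ)) (bound := bound)
      (ball_mem_nhds (0:ℝ) one_pos) ?_ ?_ ?_ ?_ hbi ?_
  · have hconst : (fun t : ℝ => ∫ x, f (x + t • v)) = fun _ => ∫ x, f x := by
      funext t; exact integral_add_right_eq_self f (t • v)
    have h2 := key.2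
    rw [hconst] at h2
    have := h2.unique (hasDerivAt_const 0 _)
    simpa [zero_smul, add_zero] using this
  · filter_upwards with t
    exact (hf.continuous.comp (continuous_id.add continuous_const)).aestronglyMeasurable
  · simpa using hf.continuous.integrable_of_hasCompactSupport hs
  · exact ((ContinuousLinearMap.apply ℝ ℝ v).continuous.comp
      (hdf.comp (continuous_id.add continuous_const))).aestronglyMeasurable
  · refine Filter.Eventually.of_forall fun x => fun t ht => ?_
    show ‖fderiv ℝ f (x + t • v) v‖ ≤ bound x
    by_cases hx : x ∈ K'
    · rw [hbd, Set.indicator_of_mem hx]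
      calc ‖fderiv ℝ f (x + t • v) v‖ ≤ ‖fderiv ℝ f (x + t • v)‖ * ‖v‖ :=
            (fderiv ℝ f (x + t • v)).le_opNorm v
        _ ≤ C * ‖v‖ := by
            exact mul_le_mul_of_nonneg_right (hC _) (norm_nonneg v)
    · have hxt : x + t • v ∉ tsupport f := by
        intro hmem
        apply hx
        refine Metric.mem_cthickening_of_dist_le x (x + t • v) ‖v‖ _ hmem ?_
        have hd : dist x (x + t • v) = |t| * ‖v‖ := by
          rw [dist_eq_norm]
          have hxx : x - (x + t • v) = -(t • v) := by abel
          rw [hxx, norm_neg, norm_smul, Real.norm_eq_abs]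
        rw [hd]
        calc |t| * ‖v‖ ≤ 1 * ‖v‖ := by
              exact mul_le_mul_of_nonneg_right (le_of_lt (by simpa using ht)) (norm_nonneg v)
          _ = ‖v‖ := one_mul _
      have h0 : fderiv ℝ f (x + t • v) = 0 := by
        have := support_fderiv_subset ℝ (f := f)
        exact Function.notMem_support.mp (fun h => hxt (this h))
      rw [h0, hbd, Set.indicator_of_notMem hx]
      simp
  · refine Filter.Eventually.of_forall fun x => fun t _ => ?_
    have h1 : HasDerivAt (fun s : ℝ => x + s • v) v t := by
      simpa using ((hasDerivAt_id t).smul_const v).const_add x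
    exact ((hf.differentiable one_ne_zero _).hasFDerivAt).comp_hasDerivAt t h1

private lemma hbasis {n : ℕ} (y : EuclideanSpace ℝ (Fin n)) :
    ∑ i, y i • EuclideanSpace.single i (1:ℝ) = y := by
  simpa [EuclideanSpace.basisFun_apply, EuclideanSpace.basisFun_repr] using
    (EuclideanSpace.basisFun (Fin n) ℝ).sum_repr y

private lemma hsq {n : ℕ} (x : EuclideanSpace ℝ (Fin n)) : ∑ i, x i * x i = ‖x‖^2 := by
  rw [EuclideanSpace.norm_eq, Real.sq_sqrt (by positivity)]
  simp [sq]

private lemma proj_app {n : ℕ} (i : Fin n) (y : EuclideanSpace ℝ (Fin n)) :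
    EuclideanSpace.proj (𝕜 := ℝ) i y = y i := rfl

private lemma hiden {n : ℕ} (u : EuclideanSpace ℝ (Fin n) → ℝ) (hu : ContDiff ℝ (⊤ : ℕ∞) u)
    (x : EuclideanSpace ℝ (Fin n)) (hx : x ≠ 0) :
    (∑ i, fderiv ℝ (fun y => u y * ((‖y‖^2)⁻¹ * y i)) x (EuclideanSpace.single i (1:ℝ)))
      = fderiv ℝ u x ((‖x‖^2)⁻¹ • x) + ((n : ℝ) - 2) * (u x * (‖x‖^2)⁻¹) := by
  have hxn : ‖x‖ ≠ 0 := norm_ne_zero_iff.mpr hx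
  have hx2 : ‖x‖^2 ≠ 0 := pow_ne_zero 2 hxn
  have hN : HasFDerivAt (fun y : EuclideanSpace ℝ (Fin n) => ‖y‖^2)
      (2 • (innerSL ℝ x)) x := (hasStrictFDerivAt_norm_sq x).hasFDerivAt
  have hI : HasFDerivAt (fun y : EuclideanSpace ℝ (Fin n) => (‖y‖^2)⁻¹)
      ((ContinuousLinearMap.smulRight (1 : ℝ →L[ℝ] ℝ) (-((‖x‖^2) ^ 2)⁻¹)).comp
        (2 • (innerSL ℝ x))) x :=
    ((hasDerivAt_inv hx2).hasFDerivAt).comp x hN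
  have hu' : HasFDerivAt u (fderiv ℝ u x) x := (hu.differentiable (by simp) x).hasFDerivAt
  have hπ : ∀ i, HasFDerivAt (fun y : EuclideanSpace ℝ (Fin n) => y i)
      (EuclideanSpace.proj (𝕜 := ℝ) i) x := fun i => (EuclideanSpace.proj (𝕜 := ℝ) i).hasFDerivAt
  have hfd : ∀ i, fderiv ℝ (fun y => u y * ((‖y‖^2)⁻¹ * y i)) x
      = u x • (((‖x‖^2)⁻¹ : ℝ) • (EuclideanSpace.proj (𝕜 := ℝ) i)
          + (x i) • ((ContinuousLinearMap.smulRight (1 : ℝ →L[ℝ] ℝ) (-((‖x‖^2) ^ 2)⁻¹)).comp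
            (2 • (innerSL ℝ x))))
        + ((‖x‖^2)⁻¹ * x i) • (fderiv ℝ u x) := by
    intro i
    exact (hu'.mul (hI.mul (hπ i))).fderiv
  have hUx : fderiv ℝ u x ((‖x‖^2)⁻¹ • x)
      = (‖x‖^2)⁻¹ * ∑ i, x i * (fderiv ℝ u x (EuclideanSpace.single i (1:ℝ))) := by
    rw [ContinuousLinearMap.map_smul, smul_eq_mul]
    congr 1
    have h := congrArg (fderiv ℝ u x) (hbasis x)
    rw [_root_.map_sum] at h
    simp only [ContinuousLinearMap.map_smul, smul_eq_mul] at h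
    exact h.symm
  simp only [hfd]
  simp only [ContinuousLinearMap.add_apply, ContinuousLinearMap.coe_smul', Pi.smul_apply,
    smul_eq_mul, ContinuousLinearMap.comp_apply, ContinuousLinearMap.smulRight_apply,
    ContinuousLinearMap.one_apply, innerSL_apply_apply, proj_app,
    EuclideanSpace.inner_single_right, conj_trivial, EuclideanSpace.single_apply, if_pos rfl]
  rw [hUx]
  have hterm2 : ∀ i : Fin n,
      (u x * (((‖x‖^2)⁻¹ * if True then (1:ℝ) else 0)
          + x i * ((2:ℕ) • ((1:ℝ) * x i) * -((‖x‖^2)^2)⁻¹))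
        + (‖x‖^2)⁻¹ * x i * (fderiv ℝ u x) (EuclideanSpace.single i (1:ℝ)))
      = (u x * (‖x‖^2)⁻¹ + (x i * x i) * (u x * (-2 * ((‖x‖^2)^2)⁻¹))
        + (‖x‖^2)⁻¹ * (x i * (fderiv ℝ u x) (EuclideanSpace.single i (1:ℝ)))) := by
    intro i; simp; ring
  rw [Finset.sum_congr rfl fun i _ => hterm2 i]
  rw [Finset.sum_add_distrib, Finset.sum_add_distrib, Finset.sum_const, ← Finset.sum_mul,
    ← Finset.mul_sum, hsq, Finset.card_univ, Fintype.card_fin, nsmul_eq_mul]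
  field_simp
  ring

/-- Hardy inequality in L² (part (b) of Theorem 3.4, Euclidean case):
`((n-2)/2)² ∫ |g|²/|x|² ≤ ∫ |(x/|x|)·∇g|²` for `g ∈ C₀^∞(ℝⁿ \ {0})`, `n ≥ 3`. -/
theorem stmt_5 (n : ℕ) (hn : 3 ≤ n)
    (g : EuclideanSpace ℝ (Fin n) → ℂ)
    (hg : ContDiff ℝ (⊤ : ℕ∞) g) (hsupp : HasCompactSupport g)
    (h0 : (0 : EuclideanSpace ℝ (Fin n)) ∉ tsupport g) :
    (((n : ℝ) - 2) / 2) ^ 2 *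
      ∫ x : EuclideanSpace ℝ (Fin n), ‖g x‖ ^ 2 / ‖x‖ ^ 2
      ≤ ∫ x : EuclideanSpace ℝ (Fin n), (‖fderiv ℝ g x x‖ / ‖x‖) ^ 2 := by
  classical
  obtain ⟨ε, εpos, hε⟩ := Metric.isOpen_iff.mp (isClosed_tsupport g).isOpen_compl 0 h0
  have hgz : ∀ x ∈ ball (0 : EuclideanSpace ℝ (Fin n)) ε, g x = 0 :=
    fun x hx => image_eq_zero_of_notMem_tsupport (hε hx)
  have hgz' : ∀ x ∈ ball (0 : EuclideanSpace ℝ (Fin n)) ε, fderiv ℝ g x = 0 := by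
    intro x hx
    exact Function.notMem_support.mp (fun h => hε hx (support_fderiv_subset ℝ h))
  set u : EuclideanSpace ℝ (Fin n) → ℝ := fun x => ‖g x‖ ^ 2 with hu_def
  have hu : ContDiff ℝ (⊤ : ℕ∞) u := hg.norm_sq (𝕜 := ℝ)
  have huc : HasCompactSupport u :=
    hsupp.comp_left (g := fun z : ℂ => ‖z‖^2) (by simp)
  have huz : ∀ x ∈ ball (0:EuclideanSpace ℝ (Fin n)) ε, u x = 0 := fun x hx => by
    simp [hu_def, hgz x hx]
  set f : Fin n → EuclideanSpace ℝ (Fin n) → ℝ :=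
    fun i x => u x * ((‖x‖^2)⁻¹ * x i) with hf_def
  have hfz : ∀ i, ∀ x ∈ ball (0:EuclideanSpace ℝ (Fin n)) ε, f i x = 0 := fun i x hx => by
    simp [hf_def, huz x hx]
  have hfC : ∀ i, ContDiff ℝ (⊤ : ℕ∞) (f i) := by
    intro i
    rw [contDiff_iff_contDiffAt]
    intro x
    rcases eq_or_ne x 0 with rfl | hx
    · have hev : f i =ᶠ[nhds (0:EuclideanSpace ℝ (Fin n))] fun _ => 0 := by
        filter_upwards [ball_mem_nhds 0 εpos] with y hy using hfz i y hy
      exact (contDiffAt_const (c := (0:ℝ))).congr_of_eventuallyEq hev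
    · have h1 : ContDiffAt ℝ (⊤ : ℕ∞) (fun y : EuclideanSpace ℝ (Fin n) => (‖y‖^2)⁻¹) x :=
        ((contDiff_norm_sq (𝕜 := ℝ)).contDiffAt).inv (pow_ne_zero 2 (norm_ne_zero_iff.mpr hx))
      exact (hu.contDiffAt).mul (h1.mul ((EuclideanSpace.proj (𝕜 := ℝ) i).contDiff.contDiffAt))
  have hfK : ∀ i, HasCompactSupport (f i) := by
    intro i
    apply huc.mono'
    intro x hx
    by_contra hx'
    have : u x = 0 := by
      by_contra h
      exact hx' (subset_closure h)
    simp [hf_def, this] at hx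
  -- divergence integrand
  set P : EuclideanSpace ℝ (Fin n) → ℝ :=
    fun x => ∑ i, fderiv ℝ (f i) x (EuclideanSpace.single i (1:ℝ)) with hP_def
  have hPc : ∀ i, Continuous fun x => fderiv ℝ (f i) x (EuclideanSpace.single i (1:ℝ)) :=
    fun i => (ContinuousLinearMap.apply ℝ ℝ _).continuous.comp ((hfC i).continuous_fderiv (by simp))
  have hPK : ∀ i, HasCompactSupport
      fun x => fderiv ℝ (f i) x (EuclideanSpace.single i (1:ℝ)) := by
    intro i
    exact ((hfK i).fderiv (𝕜 := ℝ)).comp_left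
      (g := fun T : EuclideanSpace ℝ (Fin n) →L[ℝ] ℝ => T (EuclideanSpace.single i (1:ℝ)))
      (by simp)
  have hPinti : ∀ i, Integrable
      (fun x => fderiv ℝ (f i) x (EuclideanSpace.single i (1:ℝ))) :=
    fun i => (hPc i).integrable_of_hasCompactSupport (hPK i)
  have hPint : Integrable P := by
    rw [hP_def]; exact integrable_finset_sum _ (fun i _ => hPinti i)
  have hP0 : ∫ x, P x = 0 := by
    rw [hP_def, integral_finset_sum _ (fun i _ => hPinti i)]
    exact Finset.sum_eq_zero fun i _ => lemA (f i) ((hfC i).of_le (by simp)) (hfK i) _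
  -- pointwise identity
  have hPiden : ∀ x, P x = fderiv ℝ u x ((‖x‖^2)⁻¹ • x)
      + ((n:ℝ) - 2) * (u x * (‖x‖^2)⁻¹) := by
    intro x
    rcases eq_or_ne x 0 with rfl | hx
    · have hufz : fderiv ℝ u 0 = 0 := by
        have hev : u =ᶠ[nhds (0:EuclideanSpace ℝ (Fin n))] fun _ => 0 := by
          filter_upwards [ball_mem_nhds 0 εpos] with y hy using huz y hy
        rw [hev.fderiv_eq]; exact fderiv_const_apply 0
      have hffz : ∀ i, fderiv ℝ (f i) 0 = 0 := by
        intro i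
        have hev : f i =ᶠ[nhds (0:EuclideanSpace ℝ (Fin n))] fun _ => 0 := by
          filter_upwards [ball_mem_nhds 0 εpos] with y hy using hfz i y hy
        rw [hev.fderiv_eq]; exact fderiv_const_apply 0
      simp [hP_def, hffz, hufz, huz 0 (mem_ball_self εpos)]
    · simpa [hP_def, hf_def] using hiden u hu x hx
  -- continuity helper
  have contaux : ∀ (h : EuclideanSpace ℝ (Fin n) → ℝ),
      (∀ x ∈ ball (0:EuclideanSpace ℝ (Fin n)) ε, h x = 0) →
      (∀ x : EuclideanSpace ℝ (Fin n), x ≠ 0 → ContinuousAt h x) → Continuous h := by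
    intro h h1 h2
    rw [continuous_iff_continuousAt]
    intro x
    rcases eq_or_ne x 0 with rfl | hx
    · have hev : h =ᶠ[nhds (0:EuclideanSpace ℝ (Fin n))] fun _ => (0:ℝ) := by
        filter_upwards [ball_mem_nhds 0 εpos] with y hy using h1 y hy
      exact hev.continuousAt
    · exact h2 x hx
  -- the two integrands of the statement
  set L : EuclideanSpace ℝ (Fin n) → ℝ := fun x => ‖g x‖ ^ 2 / ‖x‖ ^ 2 with hL_def
  set q : EuclideanSpace ℝ (Fin n) → ℝ := fun x => (‖fderiv ℝ g x x‖ / ‖x‖) ^ 2 with hq_def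
  have hLc : Continuous L := by
    apply contaux L (fun x hx => by simp [hL_def, hgz x hx])
    intro x hx
    exact ((hg.continuous.norm.pow 2).continuousAt).div ((continuous_norm.pow 2).continuousAt)
      (pow_ne_zero 2 (norm_ne_zero_iff.mpr hx))
  have hLK : HasCompactSupport L := by
    apply hsupp.mono'
    intro x hx
    by_contra hx'
    have : g x = 0 := image_eq_zero_of_notMem_tsupport hx'
    simp [hL_def, this] at hx
  have hLint : Integrable L := hLc.integrable_of_hasCompactSupport hLK
  have hDgc : Continuous fun x => fderiv ℝ g x x :=
    (hg.continuous_fderiv (by simp)).clm_apply continuous_id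
  have hqc : Continuous q := by
    apply contaux q (fun x hx => by simp [hq_def, hgz' x hx])
    intro x hx
    exact (((hDgc.norm.continuousAt).div (continuous_norm.continuousAt)
      (norm_ne_zero_iff.mpr hx)).pow 2)
  have hqK : HasCompactSupport q := by
    apply hsupp.mono'
    intro x hx
    by_contra hx'
    have : fderiv ℝ g x = 0 :=
      Function.notMem_support.mp (fun h => hx' (support_fderiv_subset ℝ h))
    simp [hq_def, this] at hx
  have hqint : Integrable q := hqc.integrable_of_hasCompactSupport hqK
  -- pointwise lower bound on the radial derivative term
  have hkey : ∀ x : EuclideanSpace ℝ (Fin n),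
      -(2 * ((‖g x‖ * ‖x‖⁻¹) * (‖fderiv ℝ g x x‖ * ‖x‖⁻¹)))
        ≤ fderiv ℝ u x ((‖x‖^2)⁻¹ • x) := by
    intro x
    have hD : fderiv ℝ u x = 2 • ((innerSL ℝ (g x)).comp (fderiv ℝ g x)) :=
      ((hg.differentiable (by simp) x).hasFDerivAt.norm_sq).fderiv
    rw [hD]
    simp only [ContinuousLinearMap.smul_apply, ContinuousLinearMap.comp_apply,
      ContinuousLinearMap.map_smul, innerSL_apply_apply, smul_eq_mul, nsmul_eq_mul, Nat.cast_ofNat]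
    have h1 : -(‖g x‖ * ‖fderiv ℝ g x x‖) ≤ (inner ℝ (g x) (fderiv ℝ g x x) : ℝ) := by
      have := abs_real_inner_le_norm (g x) (fderiv ℝ g x x)
      have := neg_abs_le (inner ℝ (g x) (fderiv ℝ g x x) : ℝ)
      linarith
    have h2 : (0:ℝ) ≤ (‖x‖^2)⁻¹ := inv_nonneg.2 (sq_nonneg _)
    have h3 : (‖x‖^2)⁻¹ = ‖x‖⁻¹ * ‖x‖⁻¹ := by rw [sq, mul_inv]
    have h4 := mul_le_mul_of_nonneg_left h1 h2
    rw [h3] at h4 ⊢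
    nlinarith [h4]
  -- the main pointwise inequality
  set t : ℝ := ((n:ℝ) - 2)/2 with ht_def
  have hn3 : (3:ℝ) ≤ (n:ℝ) := by exact_mod_cast hn
  have htpos : 0 < t := by rw [ht_def]; linarith
  have hpoint : ∀ x, 0 ≤ t * L x + t⁻¹ * q x + (P x - ((n:ℝ)-2) * L x) := by
    intro x
    have hL' : L x = ‖g x‖^2 * (‖x‖^2)⁻¹ := by
      simp only [hL_def]; rw [div_eq_mul_inv]
    have hq' : q x = (‖fderiv ℝ g x x‖ * ‖x‖⁻¹)^2 := by
      simp only [hq_def]; rw [div_eq_mul_inv]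
    have hk := hkey x
    have h3 : (‖x‖^2)⁻¹ = ‖x‖⁻¹ * ‖x‖⁻¹ := by rw [sq, mul_inv]
    rw [hPiden x, hL', hq']
    simp only [hu_def]
    rw [h3] at hk ⊢
    have htt : t * t⁻¹ = 1 := mul_inv_cancel₀ htpos.ne'
    nlinarith [hk, sq_nonneg (t * (‖g x‖ * ‖x‖⁻¹) - ‖fderiv ℝ g x x‖ * ‖x‖⁻¹),
      mul_pos htpos htpos, sq_nonneg (‖g x‖ * ‖x‖⁻¹), sq_nonneg (‖fderiv ℝ g x x‖ * ‖x‖⁻¹),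
      htpos.le, htt]
  -- integrate
  have hintsum : (0:ℝ) ≤ t * (∫ x, L x) + t⁻¹ * (∫ x, q x) + (0 - ((n:ℝ)-2) * ∫ x, L x) := by
    have h0le : 0 ≤ ∫ x, (t * L x + t⁻¹ * q x + (P x - ((n:ℝ)-2) * L x)) :=
      integral_nonneg hpoint
    have i1 : Integrable (fun x => t * L x) := hLint.const_mul t
    have i2 : Integrable (fun x => t⁻¹ * q x) := hqint.const_mul t⁻¹
    have i3 : Integrable (fun x => P x - ((n:ℝ)-2) * L x) :=
      hPint.sub (hLint.const_mul ((n:ℝ)-2))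
    have i12 : Integrable (fun x => t * L x + t⁻¹ * q x) := i1.add i2
    rw [integral_add i12 i3, integral_add i1 i2,
      integral_sub hPint (hLint.const_mul ((n:ℝ)-2)),
      MeasureTheory.integral_const_mul, MeasureTheory.integral_const_mul, MeasureTheory.integral_const_mul, hP0] at h0le
    linarith
  have hA : (0:ℝ) ≤ ∫ x, L x := integral_nonneg (fun x => by
    simp only [hL_def]; positivity)
  have htt : t * t⁻¹ = 1 := mul_inv_cancel₀ htpos.ne'
  have h2t : (n:ℝ) - 2 = 2 * t := by rw [ht_def]; ring
  rw [h2t] at hintsum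
  have key2 : t * (∫ x, L x) ≤ t⁻¹ * (∫ x, q x) := by linarith
  show t ^ 2 * (∫ x, L x) ≤ ∫ x, q x
  calc t ^ 2 * (∫ x, L x) = t * (t * ∫ x, L x) := by ring
    _ ≤ t * (t⁻¹ * ∫ x, q x) := mul_le_mul_of_nonneg_left key2 htpos.le
    _ = ∫ x, q x := by rw [← mul_assoc, htt, one_mul]
end

section
/- Let n ≥ 1. Then for every smooth compactly supported function g : ℝⁿ → ℂ whose support does not contain the origin, setting f(x) = g(x)/|x| one has the identity ∫_{ℝⁿ} |(x·∇f)(x)|² dx = (n-1) ∫_{ℝⁿ} |g(x)|²/|x|² dx + ∫_{ℝⁿ} |((x/|x|)·∇g)(x)|² dx. -/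
open MeasureTheory

open Filter Function in
private lemma fderiv_zero_of_nmem' {n : ℕ} {F : Type*} [NormedAddCommGroup F] [NormedSpace ℝ F]
    (f : EuclideanSpace ℝ (Fin n) → F) (x : EuclideanSpace ℝ (Fin n)) (h : x ∉ tsupport f) :
    fderiv ℝ f x = 0 := by
  have h1 : f =ᶠ[nhds x] 0 := notMem_tsupport_iff_eventuallyEq.1 h
  rw [h1.fderiv_eq]; exact fderiv_const_apply 0

open Filter Function in
private lemma int_fderiv_zero' {n : ℕ} (w : EuclideanSpace ℝ (Fin n) → ℝ) (hw : ContDiff ℝ (⊤ : ℕ∞) w)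
    (hs : HasCompactSupport w) (v : EuclideanSpace ℝ (Fin n)) :
    ∫ x : EuclideanSpace ℝ (Fin n), fderiv ℝ w x v = 0 := by
  obtain ⟨C, hC⟩ := hw.lipschitzWith_of_hasCompactSupport hs (by simp)
  have h1 := LipschitzWith.integral_lineDeriv_mul_eq (μ := volume) (f := fun _ => (1:ℝ))
    (LipschitzWith.const' (K := 0) (1:ℝ)) hC hs (-v)
  have h2 : ∀ x : EuclideanSpace ℝ (Fin n), lineDeriv ℝ w x (- -v) * (1:ℝ) = fderiv ℝ w x v := by
    intro x
    rw [neg_neg, mul_one, DifferentiableAt.lineDeriv_eq_fderiv]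
    exact (hw.differentiable (by simp)).differentiableAt
  have h3 : ∀ x : EuclideanSpace ℝ (Fin n),
      lineDeriv ℝ (fun _ => (1:ℝ)) x (-v) * w x = 0 := by
    intro x; simp [lineDeriv, deriv_const]
  simp only [h2, h3, integral_zero] at h1
  exact h1.symm

open Filter Function in
private lemma cont_div' {n : ℕ} {φ : EuclideanSpace ℝ (Fin n) → ℝ} (hφ : Continuous φ)
    (hz : ∀ᶠ y in nhds (0 : EuclideanSpace ℝ (Fin n)), φ y = 0) (k : ℕ) :
    Continuous fun x => φ x / ‖x‖ ^ k := by
  rw [continuous_iff_continuousAt]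
  intro x
  by_cases hx : x = 0
  · subst hx
    have h2 : (fun x : EuclideanSpace ℝ (Fin n) => φ x / ‖x‖ ^ k) =ᶠ[nhds 0] fun _ => 0 := by
      filter_upwards [hz] with y hy; simp [hy]
    exact ContinuousAt.congr continuousAt_const h2.symm
  · exact (hφ.continuousAt.div ((continuous_norm.pow k).continuousAt)
      (pow_ne_zero _ (norm_ne_zero_iff.2 hx)))

open Filter Function in
private lemma integrable_div' {n : ℕ} {φ : EuclideanSpace ℝ (Fin n) → ℝ}
    {K : Set (EuclideanSpace ℝ (Fin n))} (hφ : Continuous φ) (hK : IsCompact K)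
    (hKc : IsClosed K) (hsupp : support φ ⊆ K) (h0 : (0 : EuclideanSpace ℝ (Fin n)) ∉ K)
    (k : ℕ) : Integrable (fun x => φ x / ‖x‖ ^ k) volume := by
  have hz : ∀ᶠ y in nhds (0 : EuclideanSpace ℝ (Fin n)), φ y = 0 := by
    filter_upwards [hKc.isOpen_compl.mem_nhds h0] with y hy
    by_contra h
    exact hy (hsupp h)
  apply Continuous.integrable_of_hasCompactSupport (cont_div' hφ hz k)
  apply HasCompactSupport.of_support_subset_isCompact hK
  intro x hx
  have hne : φ x ≠ 0 := fun h => hx (by simp [h])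
  exact hsupp hne

open Filter Function in
/-- Key divergence identity: `∫ (x·∇u)/|x|² = (2-n) ∫ u/|x|²`. -/
private lemma key_div' {n : ℕ} (u : EuclideanSpace ℝ (Fin n) → ℝ) (hu : ContDiff ℝ (⊤ : ℕ∞) u)
    (hs : HasCompactSupport u) (h0 : (0 : EuclideanSpace ℝ (Fin n)) ∉ tsupport u) :
    ∫ x : EuclideanSpace ℝ (Fin n), fderiv ℝ u x x / ‖x‖ ^ 2
      = ((2 : ℝ) - n) * ∫ x : EuclideanSpace ℝ (Fin n), u x / ‖x‖ ^ 2 := by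
  classical
  have hUopen : IsOpen (tsupport u)ᶜ := (isClosed_tsupport u).isOpen_compl
  set w : Fin n → EuclideanSpace ℝ (Fin n) → ℝ := fun i x => u x * x i / ‖x‖ ^ 2 with hw
  have hwsupp : ∀ i, support (w i) ⊆ tsupport u := by
    intro i x hx
    by_contra h
    exact hx (by simp [hw, image_eq_zero_of_notMem_tsupport h])
  have hwc : ∀ i, HasCompactSupport (w i) := fun i =>
    HasCompactSupport.of_support_subset_isCompact hs (hwsupp i)
  have hwsm : ∀ i, ContDiff ℝ (⊤ : ℕ∞) (w i) := by
    intro i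
    rw [contDiff_iff_contDiffAt]
    intro x
    by_cases hx : x ∈ tsupport u
    · have hx0 : x ≠ 0 := fun h => h0 (h ▸ hx)
      have hp : ContDiff ℝ (⊤ : ℕ∞) (fun y : EuclideanSpace ℝ (Fin n) => y i) :=
        (EuclideanSpace.proj (𝕜 := ℝ) i).contDiff
      have h1 : ContDiffAt ℝ (⊤ : ℕ∞) (fun y : EuclideanSpace ℝ (Fin n) => u y * y i) x :=
        hu.contDiffAt.mul hp.contDiffAt
      have h2 : ContDiffAt ℝ (⊤ : ℕ∞) (fun y : EuclideanSpace ℝ (Fin n) => ‖y‖ ^ 2) x :=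
        (contDiff_norm_sq ℝ).contDiffAt
      exact h1.div h2 (pow_ne_zero _ (norm_ne_zero_iff.2 hx0))
    · have hev : w i =ᶠ[nhds x] fun _ => 0 := by
        filter_upwards [hUopen.mem_nhds hx] with y hy
        simp [hw, image_eq_zero_of_notMem_tsupport hy]
      exact (contDiffAt_const (c := (0:ℝ))).congr_of_eventuallyEq hev
  -- pointwise divergence identity
  have claim : ∀ x : EuclideanSpace ℝ (Fin n),
      ∑ i, fderiv ℝ (w i) x (EuclideanSpace.single i 1)
        = fderiv ℝ u x x / ‖x‖ ^ 2 + ((n : ℝ) - 2) * (u x / ‖x‖ ^ 2) := by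
    intro x
    by_cases hx : x ∈ tsupport u
    · have hx0 : x ≠ 0 := fun h => h0 (h ▸ hx)
      have hnx : ‖x‖ ≠ 0 := norm_ne_zero_iff.2 hx0
      have hder : ∀ i, fderiv ℝ (w i) x (EuclideanSpace.single i 1)
          = (u x + x i * fderiv ℝ u x (EuclideanSpace.single i 1)) / ‖x‖ ^ 2
            - u x * x i * (2 * x i) / (‖x‖ ^ 2) ^ 2 := by
        intro i
        have hq : HasFDerivAt (fun y : EuclideanSpace ℝ (Fin n) => ‖y‖ ^ 2)
            (2 • (innerSL ℝ x)) x := (hasStrictFDerivAt_norm_sq x).hasFDerivAt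
        have hQ : HasFDerivAt (fun y : EuclideanSpace ℝ (Fin n) => (‖y‖ ^ 2)⁻¹)
            ((-((‖x‖ ^ 2) ^ 2)⁻¹) • (2 • (innerSL ℝ x))) x := by
          have h1 : HasDerivAt (fun t : ℝ => t⁻¹) (-((‖x‖ ^ 2) ^ 2)⁻¹) (‖x‖ ^ 2) :=
            hasDerivAt_inv (pow_ne_zero _ hnx)
          exact h1.comp_hasFDerivAt x hq
        have hp : HasFDerivAt (fun y : EuclideanSpace ℝ (Fin n) => y i)
            (EuclideanSpace.proj (𝕜 := ℝ) i) x := (EuclideanSpace.proj (𝕜 := ℝ) i).hasFDerivAt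
        have hu' : HasFDerivAt u (fderiv ℝ u x) x :=
          ((hu.differentiable (by simp)) x).hasFDerivAt
        have hwi := (hu'.mul hp).mul hQ
        have h2 : w i = fun y => (u y * y i) * (‖y‖ ^ 2)⁻¹ := by
          funext y
          show u y * y i / ‖y‖ ^ 2 = u y * y i * (‖y‖ ^ 2)⁻¹
          rw [div_eq_mul_inv]
        rw [h2, show (fun y : EuclideanSpace ℝ (Fin n) => u y * y i * (‖y‖ ^ 2)⁻¹)
          = ((u * fun y => y i) * fun y => (‖y‖ ^ 2)⁻¹) from rfl, hwi.fderiv]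
        have hin : (innerSL ℝ x) (EuclideanSpace.single i (1:ℝ)) = x i := by
          simp [EuclideanSpace.inner_single_right]
        have hpr : (EuclideanSpace.proj (𝕜 := ℝ) i) (EuclideanSpace.single i (1:ℝ)) = 1 := by
          simp
        simp only [ContinuousLinearMap.add_apply, ContinuousLinearMap.smul_apply,
          ContinuousLinearMap.coe_smul', Pi.smul_apply, hin, hpr, smul_eq_mul, Pi.mul_apply]
        field_simp
        ring
      have hsum1 : fderiv ℝ u x x = ∑ i, x i * fderiv ℝ u x (EuclideanSpace.single i 1) := by
        have hx' : x = ∑ i, x i • EuclideanSpace.single i (1:ℝ) := by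
          simpa using ((EuclideanSpace.basisFun (Fin n) ℝ).sum_repr x).symm
        calc fderiv ℝ u x x = fderiv ℝ u x (∑ i, x i • EuclideanSpace.single i 1) := by
              rw [← hx']
          _ = ∑ i, x i * fderiv ℝ u x (EuclideanSpace.single i 1) := by
              rw [map_sum]; simp [smul_eq_mul]
      have hsum2 : ∑ i, (x i) ^ 2 = ‖x‖ ^ 2 := by
        rw [EuclideanSpace.norm_eq, Real.sq_sqrt (by positivity)]
        simp [sq_abs]
      simp only [hder]
      rw [Finset.sum_sub_distrib]
      have e1 : ∑ i, (u x + x i * fderiv ℝ u x (EuclideanSpace.single i 1)) / ‖x‖ ^ 2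
          = (n * u x + fderiv ℝ u x x) / ‖x‖ ^ 2 := by
        rw [← Finset.sum_div, Finset.sum_add_distrib, hsum1]
        simp [Finset.card_univ]
      have e2 : ∑ i, u x * x i * (2 * x i) / (‖x‖ ^ 2) ^ 2
          = 2 * u x / ‖x‖ ^ 2 := by
        rw [← Finset.sum_div]
        have : ∑ i, u x * x i * (2 * x i) = 2 * u x * ‖x‖ ^ 2 := by
          rw [← hsum2, Finset.mul_sum]
          congr 1; funext i; ring
        rw [this]
        field_simp
      rw [e1, e2]
      field_simp
      ring
    · have hz1 : ∀ i, fderiv ℝ (w i) x = 0 := by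
        intro i
        apply fderiv_zero_of_nmem'
        intro hmem
        exact hx (closure_minimal (hwsupp i) (isClosed_tsupport u) hmem)
      have hz2 : fderiv ℝ u x = 0 := fderiv_zero_of_nmem' u x hx
      have hz3 : u x = 0 := image_eq_zero_of_notMem_tsupport hx
      simp [hz1, hz2, hz3]
  -- integrate
  have hintA : Integrable (fun x : EuclideanSpace ℝ (Fin n) => fderiv ℝ u x x / ‖x‖ ^ 2)
      volume := by
    apply integrable_div' ((hu.continuous_fderiv (by simp)).clm_apply continuous_id)
      hs (isClosed_tsupport u) _ h0 2
    intro x hx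
    by_contra h
    exact hx (by simp [fderiv_zero_of_nmem' u x h])
  have hintB : Integrable (fun x : EuclideanSpace ℝ (Fin n) => u x / ‖x‖ ^ 2) volume := by
    apply integrable_div' hu.continuous hs (isClosed_tsupport u) (subset_tsupport u) h0 2
  have hintW : ∀ i, Integrable
      (fun x : EuclideanSpace ℝ (Fin n) => fderiv ℝ (w i) x (EuclideanSpace.single i 1))
      volume := by
    intro i
    apply Continuous.integrable_of_hasCompactSupport
      (((hwsm i).continuous_fderiv (by simp)).clm_apply continuous_const)
    apply HasCompactSupport.of_support_subset_isCompact (hwc i).isCompact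
    intro x hx
    by_contra h
    have : fderiv ℝ (w i) x = 0 := fderiv_zero_of_nmem' (w i) x h
    exact hx (by simp [this])
  have hzero : (0 : ℝ) = ∫ x : EuclideanSpace ℝ (Fin n),
      (fderiv ℝ u x x / ‖x‖ ^ 2 + ((n : ℝ) - 2) * (u x / ‖x‖ ^ 2)) := by
    rw [← integral_congr_ae (Filter.Eventually.of_forall claim)]
    rw [integral_finset_sum _ (fun i _ => hintW i)]
    rw [Finset.sum_eq_zero]
    intro i _
    exact int_fderiv_zero' (w i) (hwsm i) (hwc i) _
  rw [integral_add hintA ((hintB.const_mul _))] at hzero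
  rw [integral_const_mul] at hzero
  linarith

open Filter Function in
/-- Pointwise identity away from zero. -/
private lemma ptwise' {n : ℕ} (g : EuclideanSpace ℝ (Fin n) → ℂ) (hg : ContDiff ℝ (⊤ : ℕ∞) g)
    (x : EuclideanSpace ℝ (Fin n)) (hx0 : x ≠ 0) :
    ‖fderiv ℝ (fun y : EuclideanSpace ℝ (Fin n) => g y / (‖y‖ : ℂ)) x x‖ ^ 2
      = ‖fderiv ℝ g x x‖ ^ 2 / ‖x‖ ^ 2 + ‖g x‖ ^ 2 / ‖x‖ ^ 2
        - fderiv ℝ (fun y => ‖g y‖ ^ 2) x x / ‖x‖ ^ 2 := by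
  have hnx : ‖x‖ ≠ 0 := norm_ne_zero_iff.2 hx0
  have hq : HasFDerivAt (fun y : EuclideanSpace ℝ (Fin n) => ‖y‖ ^ 2)
      (2 • (innerSL ℝ x)) x := (hasStrictFDerivAt_norm_sq x).hasFDerivAt
  have hnorm : HasFDerivAt (fun y : EuclideanSpace ℝ (Fin n) => ‖y‖)
      ((1 / (2 * ‖x‖)) • (2 • (innerSL ℝ x))) x := by
    have h1 := (Real.hasDerivAt_sqrt (pow_ne_zero 2 hnx)).comp_hasFDerivAt x hq
    have h1' : HasFDerivAt (fun y : EuclideanSpace ℝ (Fin n) => Real.sqrt (‖y‖ ^ 2))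
        ((1 / (2 * Real.sqrt (‖x‖ ^ 2))) • (2 • (innerSL ℝ x))) x := h1
    have h2 : (fun y : EuclideanSpace ℝ (Fin n) => Real.sqrt (‖y‖ ^ 2))
        = fun y => ‖y‖ := by
      funext y; rw [Real.sqrt_sq (norm_nonneg y)]
    rw [h2, Real.sqrt_sq (norm_nonneg x)] at h1'
    exact h1'
  have hinv : HasFDerivAt (fun y : EuclideanSpace ℝ (Fin n) => ‖y‖⁻¹)
      ((-(‖x‖ ^ 2)⁻¹) • ((1 / (2 * ‖x‖)) • (2 • (innerSL ℝ x)))) x :=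
    (hasDerivAt_inv hnx).comp_hasFDerivAt x hnorm
  have hg' : HasFDerivAt g (fderiv ℝ g x) x := ((hg.differentiable (by simp)) x).hasFDerivAt
  have hf : HasFDerivAt (fun y : EuclideanSpace ℝ (Fin n) => ‖y‖⁻¹ • g y)
      (‖x‖⁻¹ • (fderiv ℝ g x)
        + ((-(‖x‖ ^ 2)⁻¹) • ((1 / (2 * ‖x‖)) • (2 • (innerSL ℝ x)))).smulRight (g x)) x :=
    hinv.smul hg'
  have hfe : (fun y : EuclideanSpace ℝ (Fin n) => g y / (‖y‖ : ℂ))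
      = fun y => ‖y‖⁻¹ • g y := by
    funext y
    rw [div_eq_mul_inv, mul_comm]
    push_cast [Complex.real_smul]
    norm_cast
  rw [hfe, hf.fderiv]
  have hix : (innerSL ℝ x) x = ‖x‖ ^ 2 := real_inner_self_eq_norm_sq x
  have hDfx : (‖x‖⁻¹ • (fderiv ℝ g x)
      + ((-(‖x‖ ^ 2)⁻¹) • ((1 / (2 * ‖x‖)) • (2 • (innerSL ℝ x)))).smulRight (g x)) x
      = ‖x‖⁻¹ • (fderiv ℝ g x x - g x) := by
    simp only [ContinuousLinearMap.add_apply, ContinuousLinearMap.smul_apply,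
      ContinuousLinearMap.smulRight_apply, hix, smul_eq_mul]
    rw [smul_sub]
    have hc : (-(‖x‖ ^ 2)⁻¹ * (1 / (2 * ‖x‖) * 2 • ‖x‖ ^ 2)) = -(‖x‖⁻¹) := by
      field_simp; ring
    rw [hc, sub_eq_add_neg, neg_smul]
  rw [hDfx]
  rw [norm_smul]
  have hsq : ‖fderiv ℝ g x x - g x‖ ^ 2
      = ‖fderiv ℝ g x x‖ ^ 2 + ‖g x‖ ^ 2
        - 2 * ((fderiv ℝ g x x).re * (g x).re + (fderiv ℝ g x x).im * (g x).im) := by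
    set a := fderiv ℝ g x x
    set b := g x
    have hns : ∀ z : ℂ, ‖z‖ ^ 2 = z.re ^ 2 + z.im ^ 2 := fun z => by
      rw [Complex.sq_norm, Complex.normSq_apply]; ring
    rw [hns, hns, hns, Complex.sub_re, Complex.sub_im]
    ring
  have hu' : HasFDerivAt (fun y => ‖g y‖ ^ 2)
      (2 • ((innerSL ℝ (g x)).comp (fderiv ℝ g x))) x := hg'.norm_sq
  have hDu : fderiv ℝ (fun y => ‖g y‖ ^ 2) x x
      = 2 * ((g x).re * (fderiv ℝ g x x).re + (g x).im * (fderiv ℝ g x x).im) := by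
    rw [hu'.fderiv]
    simp only [ContinuousLinearMap.smul_apply, ContinuousLinearMap.coe_comp', Function.comp_apply,
      innerSL_apply_apply, smul_eq_mul]
    rw [Complex.inner]
    simp [Complex.mul_re]
    ring
  rw [hDu, norm_inv, norm_norm, mul_pow, hsq]
  field_simp

/-- For `g ∈ C₀^∞(ℝⁿ \ {0})` and `f(x) = g(x)/|x|`, the identity
`∫ |x·∇f|² = (n-1) ∫ |g|²/|x|² + ∫ |(x/|x|)·∇g|²`. -/
theorem stmt_8 (n : ℕ) (hn : 1 ≤ n)
    (g : EuclideanSpace ℝ (Fin n) → ℂ)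
    (hg : ContDiff ℝ (⊤ : ℕ∞) g) (hsupp : HasCompactSupport g)
    (h0 : (0 : EuclideanSpace ℝ (Fin n)) ∉ tsupport g) :
    ∫ x : EuclideanSpace ℝ (Fin n),
        ‖fderiv ℝ (fun y : EuclideanSpace ℝ (Fin n) => g y / (‖y‖ : ℂ)) x x‖ ^ 2
      = ((n : ℝ) - 1) * (∫ x : EuclideanSpace ℝ (Fin n), ‖g x‖ ^ 2 / ‖x‖ ^ 2)
        + ∫ x : EuclideanSpace ℝ (Fin n), (‖fderiv ℝ g x x‖ / ‖x‖) ^ 2 := by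
  classical
  have hUopen : IsOpen (tsupport g)ᶜ := (isClosed_tsupport g).isOpen_compl
  -- the function u = ‖g‖²
  have hu : ContDiff ℝ (⊤ : ℕ∞) (fun y : EuclideanSpace ℝ (Fin n) => ‖g y‖ ^ 2) :=
    hg.norm_sq ℂ
  have husupp : Function.support (fun y : EuclideanSpace ℝ (Fin n) => ‖g y‖ ^ 2)
      ⊆ tsupport g := by
    intro x hx
    apply subset_tsupport g
    intro h
    exact hx (by simp [h])
  have hsu : HasCompactSupport (fun y : EuclideanSpace ℝ (Fin n) => ‖g y‖ ^ 2) :=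
    HasCompactSupport.of_support_subset_isCompact hsupp husupp
  have h0u : (0 : EuclideanSpace ℝ (Fin n))
      ∉ tsupport (fun y : EuclideanSpace ℝ (Fin n) => ‖g y‖ ^ 2) := by
    intro h
    exact h0 (closure_minimal husupp (isClosed_tsupport g) h)
  -- support of g/‖·‖
  have hfsupp : Function.support (fun y : EuclideanSpace ℝ (Fin n) => g y / (‖y‖ : ℂ))
      ⊆ tsupport g := by
    intro x hx
    apply subset_tsupport g
    intro h
    exact hx (by simp [h])
  -- pointwise identity
  have P1 : ∀ x : EuclideanSpace ℝ (Fin n),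
      ‖fderiv ℝ (fun y : EuclideanSpace ℝ (Fin n) => g y / (‖y‖ : ℂ)) x x‖ ^ 2
        = ‖fderiv ℝ g x x‖ ^ 2 / ‖x‖ ^ 2 + ‖g x‖ ^ 2 / ‖x‖ ^ 2
          - fderiv ℝ (fun y => ‖g y‖ ^ 2) x x / ‖x‖ ^ 2 := by
    intro x
    by_cases hx : x ∈ tsupport g
    · exact ptwise' g hg x (fun h => h0 (h ▸ hx))
    · have hz1 : fderiv ℝ (fun y : EuclideanSpace ℝ (Fin n) => g y / (‖y‖ : ℂ)) x = 0 := by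
        apply fderiv_zero_of_nmem'
        intro hmem
        exact hx (closure_minimal hfsupp (isClosed_tsupport g) hmem)
      have hz2 : fderiv ℝ g x = 0 := fderiv_zero_of_nmem' g x hx
      have hz3 : g x = 0 := image_eq_zero_of_notMem_tsupport hx
      have hz4 : fderiv ℝ (fun y : EuclideanSpace ℝ (Fin n) => ‖g y‖ ^ 2) x = 0 := by
        apply fderiv_zero_of_nmem'
        intro hmem
        exact hx (closure_minimal husupp (isClosed_tsupport g) hmem)
      rw [hz1, hz2, hz4]
      simp [hz3]
  have P3 : ∀ x : EuclideanSpace ℝ (Fin n),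
      (‖fderiv ℝ g x x‖ / ‖x‖) ^ 2 = ‖fderiv ℝ g x x‖ ^ 2 / ‖x‖ ^ 2 := fun x =>
    div_pow _ _ 2
  -- integrability
  have hintA : Integrable
      (fun x : EuclideanSpace ℝ (Fin n) => ‖fderiv ℝ g x x‖ ^ 2 / ‖x‖ ^ 2) volume := by
    apply integrable_div' (((hg.continuous_fderiv (by simp)).clm_apply continuous_id).norm.pow 2)
      hsupp (isClosed_tsupport g) _ h0 2
    intro x hx
    by_contra h
    exact hx (by simp [fderiv_zero_of_nmem' g x h])
  have hintB : Integrable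
      (fun x : EuclideanSpace ℝ (Fin n) => ‖g x‖ ^ 2 / ‖x‖ ^ 2) volume := by
    apply integrable_div' (hg.continuous.norm.pow 2) hsupp (isClosed_tsupport g) husupp h0 2
  have hintC : Integrable
      (fun x : EuclideanSpace ℝ (Fin n) =>
        fderiv ℝ (fun y => ‖g y‖ ^ 2) x x / ‖x‖ ^ 2) volume := by
    apply integrable_div'
      (φ := fun x : EuclideanSpace ℝ (Fin n) => fderiv ℝ (fun y => ‖g y‖ ^ 2) x x)
      ((hu.continuous_fderiv (by simp)).clm_apply continuous_id)
      hsupp (isClosed_tsupport g) _ h0 2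
    intro x hx
    by_contra h
    have hz : fderiv ℝ (fun y : EuclideanSpace ℝ (Fin n) => ‖g y‖ ^ 2) x = 0 := by
      apply fderiv_zero_of_nmem'
      intro hmem
      exact h (closure_minimal husupp (isClosed_tsupport g) hmem)
    apply hx
    show (fderiv ℝ (fun y : EuclideanSpace ℝ (Fin n) => ‖g y‖ ^ 2) x) x = 0
    rw [hz]; simp
  -- key identity
  have keyres := key_div' (fun y : EuclideanSpace ℝ (Fin n) => ‖g y‖ ^ 2) hu hsu h0u
  -- assemble
  have hAB : Integrable (fun x : EuclideanSpace ℝ (Fin n) =>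
      ‖fderiv ℝ g x x‖ ^ 2 / ‖x‖ ^ 2 + ‖g x‖ ^ 2 / ‖x‖ ^ 2) volume := hintA.add hintB
  simp only [P1, P3]
  rw [integral_sub hAB hintC, integral_add hintA hintB, keyres]
  ring
end

section
/- Let n ≥ 1. Then for every smooth compactly supported function f : ℝⁿ → ℂ whose support does not contain the origin, setting g(x) = |x| f(x) one has the identity ∫_{ℝⁿ} |((x/|x|)·∇g)(x)|² dx = ∫_{ℝⁿ} |(x·∇f)(x)|² dx - (n-1) ∫_{ℝⁿ} |f(x)|² dx. -/
open MeasureTheory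

lemma aux_div (n : ℕ) (φ : EuclideanSpace ℝ (Fin n) → ℝ)
    (hh : ContDiff ℝ (⊤ : ℕ∞) φ) (hc : HasCompactSupport φ) :
    ∫ x : EuclideanSpace ℝ (Fin n), fderiv ℝ φ x x
      = -(n : ℝ) * ∫ x : EuclideanSpace ℝ (Fin n), φ x := by
  have hcf : Continuous (fderiv ℝ φ) := hh.continuous_fderiv (by simp)
  have hder : ∀ v : EuclideanSpace ℝ (Fin n),
      Continuous (fun x : EuclideanSpace ℝ (Fin n) => fderiv ℝ φ x v) := fun v =>
    (ContinuousLinearMap.apply ℝ ℝ v).continuous.comp hcf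
  have hdersupp : ∀ v : EuclideanSpace ℝ (Fin n),
      HasCompactSupport (fun x : EuclideanSpace ℝ (Fin n) => fderiv ℝ φ x v) := fun v =>
    (hc.fderiv ℝ).comp_left (g := fun L : EuclideanSpace ℝ (Fin n) →L[ℝ] ℝ => L v) rfl
  have key : ∀ i : Fin n,
      (∫ x : EuclideanSpace ℝ (Fin n), x i * fderiv ℝ φ x (EuclideanSpace.single i 1))
        = - ∫ x : EuclideanSpace ℝ (Fin n), φ x := by
    intro i
    have hp : Differentiable ℝ (fun x : EuclideanSpace ℝ (Fin n) => x i) :=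
      (EuclideanSpace.proj (𝕜 := ℝ) i).differentiable
    have hpf : ∀ x : EuclideanSpace ℝ (Fin n),
        fderiv ℝ (fun x : EuclideanSpace ℝ (Fin n) => x i) x = EuclideanSpace.proj (𝕜 := ℝ) i :=
      fun x => (EuclideanSpace.proj (𝕜 := ℝ) i).fderiv
    have h1 : Integrable (fun x : EuclideanSpace ℝ (Fin n) =>
        fderiv ℝ (fun x : EuclideanSpace ℝ (Fin n) => x i) x (EuclideanSpace.single i 1) * φ x) := by
      have := Continuous.integrable_of_hasCompactSupport (μ := volume) hh.continuous hc
      simpa [hpf, EuclideanSpace.single_apply] using this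
    have h2 : Integrable (fun x : EuclideanSpace ℝ (Fin n) =>
        x i * fderiv ℝ φ x (EuclideanSpace.single i 1)) :=
      Continuous.integrable_of_hasCompactSupport
        (((EuclideanSpace.proj (𝕜 := ℝ) i).continuous).mul (hder _)) (hdersupp _).mul_left
    have h3 : Integrable (fun x : EuclideanSpace ℝ (Fin n) => x i * φ x) :=
      Continuous.integrable_of_hasCompactSupport
        (((EuclideanSpace.proj (𝕜 := ℝ) i).continuous).mul hh.continuous) hc.mul_left
    have := integral_mul_fderiv_eq_neg_fderiv_mul_of_integrable h1 h2 h3 (fun x _ => hp x)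
      (fun x _ => hh.differentiable (by simp) x)
    rw [this]
    congr 1
    refine integral_congr_ae (Filter.Eventually.of_forall fun x => ?_)
    simp [hpf, EuclideanSpace.single_apply]
  have hxsum : ∀ x : EuclideanSpace ℝ (Fin n), fderiv ℝ φ x x
      = ∑ i : Fin n, x i * fderiv ℝ φ x (EuclideanSpace.single i 1) := by
    intro x
    have hx : x = ∑ i : Fin n, x i • EuclideanSpace.single i (1 : ℝ) := by
      ext j
      rw [WithLp.ofLp_sum, Finset.sum_apply]
      simp [EuclideanSpace.single_apply]
    calc fderiv ℝ φ x x = fderiv ℝ φ x (∑ i : Fin n, x i • EuclideanSpace.single i (1 : ℝ)) :=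
          congrArg (fderiv ℝ φ x) hx
      _ = ∑ i : Fin n, x i * fderiv ℝ φ x (EuclideanSpace.single i 1) := by
          rw [map_sum]; simp [smul_eq_mul]
  calc ∫ x : EuclideanSpace ℝ (Fin n), fderiv ℝ φ x x
      = ∫ x : EuclideanSpace ℝ (Fin n),
          ∑ i : Fin n, x i * fderiv ℝ φ x (EuclideanSpace.single i 1) :=
        integral_congr_ae (Filter.Eventually.of_forall fun x => hxsum x)
    _ = ∑ i : Fin n, ∫ x : EuclideanSpace ℝ (Fin n),
          x i * fderiv ℝ φ x (EuclideanSpace.single i 1) :=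
        integral_finset_sum _ fun i _ =>
          Continuous.integrable_of_hasCompactSupport
            (((EuclideanSpace.proj (𝕜 := ℝ) i).continuous).mul (hder _)) (hdersupp _).mul_left
    _ = ∑ _i : Fin n, (- ∫ x : EuclideanSpace ℝ (Fin n), φ x) :=
        Finset.sum_congr rfl fun i _ => key i
    _ = -(n : ℝ) * ∫ x : EuclideanSpace ℝ (Fin n), φ x := by
        simp [Finset.sum_const]


lemma aux_norm_deriv {E : Type*} [NormedAddCommGroup E] [InnerProductSpace ℝ E]
    {x : E} (hx : x ≠ 0) :
    HasFDerivAt (fun y : E => ‖y‖) (‖x‖⁻¹ • innerSL ℝ x) x := by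
  have hnx : ‖x‖ ≠ 0 := norm_ne_zero_iff.2 hx
  have h2 : (‖x‖ : ℝ)^2 ≠ 0 := pow_ne_zero _ hnx
  have hsq : HasFDerivAt (fun y : E => ‖y‖^2) (2 • innerSL ℝ x) x :=
    (hasStrictFDerivAt_norm_sq x).hasFDerivAt
  have hsqrt : HasDerivAt Real.sqrt (1 / (2 * Real.sqrt (‖x‖^2))) (‖x‖^2) :=
    Real.hasDerivAt_sqrt h2
  have hcomp := hsqrt.comp_hasFDerivAt x hsq
  have heq : (Real.sqrt ∘ fun y : E => ‖y‖^2) = fun y : E => ‖y‖ := by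
    funext y; exact Real.sqrt_sq (norm_nonneg y)
  rw [heq] at hcomp
  refine hcomp.congr_fderiv ?_
  rw [Real.sqrt_sq (norm_nonneg x)]
  ext v
  simp only [ContinuousLinearMap.smul_apply, smul_eq_mul, ContinuousLinearMap.smul_apply,
    two_smul, ContinuousLinearMap.add_apply]
  ring

lemma aux_gderiv (n : ℕ) (f : EuclideanSpace ℝ (Fin n) → ℂ)
    (hf : ContDiff ℝ (⊤ : ℕ∞) f) {x : EuclideanSpace ℝ (Fin n)} (hx : x ≠ 0) :
    fderiv ℝ (fun y : EuclideanSpace ℝ (Fin n) => (‖y‖ : ℂ) * f y) x x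
      = (‖x‖ : ℂ) * (f x + fderiv ℝ f x x) := by
  have hnx : ‖x‖ ≠ 0 := norm_ne_zero_iff.2 hx
  have hN : HasFDerivAt (fun y : EuclideanSpace ℝ (Fin n) => (‖y‖ : ℂ))
      (Complex.ofRealCLM.comp (‖x‖⁻¹ • innerSL ℝ x)) x :=
    Complex.ofRealCLM.hasFDerivAt.comp x (aux_norm_deriv hx)
  have hf' : HasFDerivAt f (fderiv ℝ f x) x := (hf.differentiable (by simp) x).hasFDerivAt
  have hmul := hN.mul hf'
  rw [show (fun y : EuclideanSpace ℝ (Fin n) => (‖y‖ : ℂ) * f y) = (fun y : EuclideanSpace ℝ (Fin n) => (‖y‖ : ℂ)) * f from rfl, hmul.fderiv]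
  simp only [ContinuousLinearMap.add_apply, ContinuousLinearMap.smul_apply,
    ContinuousLinearMap.coe_comp', Function.comp_apply, Complex.ofRealCLM_apply,
    smul_eq_mul, ContinuousLinearMap.smul_apply, real_inner_self_eq_norm_sq]
  rw [show ((innerSL ℝ) x) x = ‖x‖^2 from real_inner_self_eq_norm_sq x]
  have hnx' : (‖x‖ : ℂ) ≠ 0 := by exact_mod_cast hnx
  push_cast
  field_simp
  ring

/-- For `f ∈ C₀^∞(ℝⁿ \ {0})` and `g(x) = |x| f(x)`, the identity
`∫ |(x/|x|)·∇g|² = ∫ |x·∇f|² - (n-1) ∫ |f|²`. -/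
theorem stmt_9 (n : ℕ) (hn : 1 ≤ n)
    (f : EuclideanSpace ℝ (Fin n) → ℂ)
    (hf : ContDiff ℝ (⊤ : ℕ∞) f) (hsupp : HasCompactSupport f)
    (h0 : (0 : EuclideanSpace ℝ (Fin n)) ∉ tsupport f) :
    ∫ x : EuclideanSpace ℝ (Fin n),
        (‖fderiv ℝ (fun y : EuclideanSpace ℝ (Fin n) => (‖y‖ : ℂ) * f y) x x‖ / ‖x‖) ^ 2
      = (∫ x : EuclideanSpace ℝ (Fin n), ‖fderiv ℝ f x x‖ ^ 2)
        - ((n : ℝ) - 1) * ∫ x : EuclideanSpace ℝ (Fin n), ‖f x‖ ^ 2 := by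
  -- the radial derivative u x = fderiv f x x
  set u : EuclideanSpace ℝ (Fin n) → ℂ := fun x => fderiv ℝ f x x with hu
  have hu_cont : Continuous u := by
    simpa [hu] using (hf.continuous_fderiv (by simp)).clm_apply continuous_id
  have hu_supp : HasCompactSupport u := by
    refine (hsupp.fderiv ℝ).mono' fun x hx => ?_
    have hne : fderiv ℝ f x ≠ 0 := fun h => hx (by simp [hu, h])
    exact subset_tsupport _ hne
  -- pointwise identity for the integrand
  have hpt : ∀ x : EuclideanSpace ℝ (Fin n),
      (‖fderiv ℝ (fun y : EuclideanSpace ℝ (Fin n) => (‖y‖ : ℂ) * f y) x x‖ / ‖x‖) ^ 2 = ‖f x + u x‖ ^ 2 := by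
    intro x
    rcases eq_or_ne x 0 with rfl | hx
    · have hev : f =ᶠ[nhds (0 : EuclideanSpace ℝ (Fin n))] 0 := notMem_tsupport_iff_eventuallyEq.1 h0
      have hgev : (fun y : EuclideanSpace ℝ (Fin n) => (‖y‖ : ℂ) * f y) =ᶠ[nhds (0 : EuclideanSpace ℝ (Fin n))] 0 := by
        filter_upwards [hev] with y hy
        simp [hy]
      have hg0 : fderiv ℝ (fun y : EuclideanSpace ℝ (Fin n) => (‖y‖ : ℂ) * f y) 0 = 0 := by
        rw [hgev.fderiv_eq]; exact fderiv_const_apply 0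
      have hf0 : fderiv ℝ f 0 = 0 := by
        rw [hev.fderiv_eq]; exact fderiv_const_apply 0
      have hfv : f 0 = 0 := hev.eq_of_nhds
      simp [hg0, hf0, hfv, hu]
    · have hnx : ‖x‖ ≠ 0 := norm_ne_zero_iff.2 hx
      rw [aux_gderiv n f hf hx, norm_mul, Complex.norm_real, Real.norm_eq_abs,
        abs_of_nonneg (norm_nonneg x), mul_comm, mul_div_assoc, div_self hnx, mul_one]
  -- integrability facts
  have hf_cont : Continuous f := hf.continuous
  have hI1 : Integrable (fun x : EuclideanSpace ℝ (Fin n) => ‖u x‖ ^ 2) := by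
    refine Continuous.integrable_of_hasCompactSupport (by fun_prop) ?_
    exact hu_supp.comp_left (g := fun z : ℂ => ‖z‖ ^ 2) (by simp)
  have hI2 : Integrable (fun x : EuclideanSpace ℝ (Fin n) => ‖f x‖ ^ 2) := by
    refine Continuous.integrable_of_hasCompactSupport (by fun_prop) ?_
    exact hsupp.comp_left (g := fun z : ℂ => ‖z‖ ^ 2) (by simp)
  have hI3 : Integrable (fun x : EuclideanSpace ℝ (Fin n) => 2 * (inner ℝ (f x) (u x) : ℝ)) := by
    refine Continuous.integrable_of_hasCompactSupport
      (continuous_const.mul (hf_cont.inner hu_cont)) ?_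
    refine hsupp.mono' ?_
    intro x hx
    simp only [Function.mem_support, ne_eq] at hx
    by_contra hfx
    exact hx (by simp [image_eq_zero_of_notMem_tsupport hfx])
  -- the function h = ‖f‖²
  have hh_cd : ContDiff ℝ (⊤ : ℕ∞) (fun x : EuclideanSpace ℝ (Fin n) => ‖f x‖ ^ 2) := ContDiff.norm_sq ℝ hf
  have hh_supp : HasCompactSupport (fun x : EuclideanSpace ℝ (Fin n) => ‖f x‖ ^ 2) :=
    hsupp.comp_left (g := fun z : ℂ => ‖z‖ ^ 2) (by simp)
  have hh_fderiv : ∀ x : EuclideanSpace ℝ (Fin n), fderiv ℝ (fun x : EuclideanSpace ℝ (Fin n) => ‖f x‖ ^ 2) x x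
      = 2 * (inner ℝ (f x) (u x) : ℝ) := by
    intro x
    have hfd : HasFDerivAt f (fderiv ℝ f x) x := (hf.differentiable (by simp) x).hasFDerivAt
    rw [hfd.norm_sq.fderiv]
    simp [hu, two_smul]
    ring
  have hdiv := aux_div n (fun x : EuclideanSpace ℝ (Fin n) => ‖f x‖ ^ 2) hh_cd hh_supp
  have hinner_int : ∫ x : EuclideanSpace ℝ (Fin n), 2 * (inner ℝ (f x) (u x) : ℝ)
      = -(n : ℝ) * ∫ x : EuclideanSpace ℝ (Fin n), ‖f x‖ ^ 2 := by
    rw [← hdiv]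
    exact integral_congr_ae (Filter.Eventually.of_forall fun x => (hh_fderiv x).symm)
  -- assemble
  calc ∫ x : EuclideanSpace ℝ (Fin n), (‖fderiv ℝ (fun y : EuclideanSpace ℝ (Fin n) => (‖y‖ : ℂ) * f y) x x‖ / ‖x‖) ^ 2
      = ∫ x : EuclideanSpace ℝ (Fin n), (‖u x‖ ^ 2 + (2 * (inner ℝ (f x) (u x) : ℝ) + ‖f x‖ ^ 2)) := by
        refine integral_congr_ae (Filter.Eventually.of_forall fun x => ?_)
        simp only [hpt x, norm_add_sq_real]
        ring
    _ = (∫ x : EuclideanSpace ℝ (Fin n), ‖u x‖ ^ 2) + ∫ x : EuclideanSpace ℝ (Fin n), (2 * (inner ℝ (f x) (u x) : ℝ) + ‖f x‖ ^ 2) :=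
        integral_add hI1 (hI3.add hI2)
    _ = (∫ x : EuclideanSpace ℝ (Fin n), ‖u x‖ ^ 2) - ((n : ℝ) - 1) * ∫ x : EuclideanSpace ℝ (Fin n), ‖f x‖ ^ 2 := by
        rw [integral_add hI3 hI2, hinner_int]
        ring
end

section
/- Let n ≥ 1, let 1 < p, q < ∞ and 0 < r < ∞ with p + q ≥ r, let δ ∈ [0,1] with (r-q)/r ≤ δ ≤ p/r, and let a, b, c ∈ ℝ. Assume δr/p + (1-δ)r/q = 1, c = δ(a-1) + b(1-δ), and n ≠ p(1-a). Then for every smooth compactly supported function f : ℝⁿ → ℂ whose support does not contain the origin, one has ‖ |x|^c f ‖_{L^r(ℝⁿ)} ≤ |p/(n+p(a-1))|^δ · ‖ |x|^a |∇f| ‖_{L^p(ℝⁿ)}^δ · ‖ |x|^b f ‖_{L^q(ℝⁿ)}^{1-δ}. -/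
set_option linter.unusedSectionVars false

open MeasureTheory Real Filter Asymptotics

section aux
variable {E : Type*} [NormedAddCommGroup E] [NormedSpace ℝ E]

lemma aux_hasFDerivAt_norm_rpow {f : E → ℂ} (hf : Differentiable ℝ f) {p : ℝ} (hp : 1 < p)
    (x : E) :
    HasFDerivAt (fun y => ‖f y‖ ^ p)
      ((p * ‖f x‖ ^ (p - 2)) • ((innerSL ℝ (f x)).comp (fderiv ℝ f x))) x := by
  have hp0 : (0:ℝ) < p := by linarith
  by_cases hx : f x = 0
  · have hzero : ((p * ‖f x‖ ^ (p - 2)) • ((innerSL ℝ (f x)).comp (fderiv ℝ f x)))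
        = (0 : E →L[ℝ] ℝ) := by
      rw [hx]
      simp only [map_zero, ContinuousLinearMap.zero_comp, smul_zero]
    rw [hzero]
    rw [hasFDerivAt_iff_isLittleO_nhds_zero]
    have hO : (fun y => f y) =O[nhds x] (fun y => y - x) := by
      simpa [hx] using (hf x).hasFDerivAt.isBigO_sub
    have h1 : Tendsto (fun y => ‖f y‖ ^ (p - 1)) (nhds x) (nhds 0) := by
      have hc : Tendsto (fun y => ‖f y‖) (nhds x) (nhds 0) := by
        simpa [hx] using (hf.continuous.norm.tendsto x)
      have hr : Tendsto (fun t : ℝ => t ^ (p - 1)) (nhds 0) (nhds 0) := by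
        have := (Real.continuousAt_rpow_const 0 (p-1) (Or.inr (by linarith))).tendsto
        simpa [Real.zero_rpow (by linarith : p - 1 ≠ 0)] using this
      exact hr.comp hc
    have heq : ∀ y, ‖f y‖ ^ p = ‖f y‖ ^ (p-1) * ‖f y‖ := by
      intro y
      by_cases h : f y = 0
      · simp [h, Real.zero_rpow (ne_of_gt hp0), Real.zero_rpow (by linarith : p - 1 ≠ 0)]
      · rw [← Real.rpow_add_one (norm_ne_zero_iff.2 h)]; ring_nf
    have hlo : (fun y => ‖f y‖ ^ (p-1) * ‖f y‖) =o[nhds x] (fun y => y - x) := by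
      have h2 : (fun y => ‖f y‖ ^ (p-1)) =o[nhds x] (fun _ => (1:ℝ)) :=
        (isLittleO_one_iff ℝ).2 h1
      have h3 : (fun y => ‖f y‖) =O[nhds x] (fun y => ‖y - x‖) := hO.norm_norm
      have := h2.mul_isBigO h3
      simp only [one_mul] at this
      exact this.trans_isBigO (isBigO_norm_left.2 (isBigO_refl _ _))
    have hlo2 : (fun y => ‖f y‖ ^ p) =o[nhds x] (fun y => y - x) := by
      refine hlo.congr' ?_ (Eventually.of_forall fun y => rfl)
      exact Eventually.of_forall fun y => (heq y).symm
    have htend : Tendsto (fun h : E => x + h) (nhds 0) (nhds x) := by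
      simpa using (tendsto_const_nhds.add tendsto_id : Tendsto (fun h : E => x + h) (nhds 0) (nhds (x + 0)))
    have := hlo2.comp_tendsto htend
    simp only [Function.comp_def, add_sub_cancel_left] at this
    simp only [hx, norm_zero, Real.zero_rpow (ne_of_gt hp0), sub_zero,
      ContinuousLinearMap.zero_apply]
    exact this
  · have hnx : (0:ℝ) < ‖f x‖ := norm_pos_iff.2 hx
    have h2 : HasFDerivAt (fun y => ‖f y‖ ^ 2)
        (2 • ((innerSL ℝ (f x)).comp (fderiv ℝ f x))) x := (hf x).hasFDerivAt.norm_sq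
    have hsq : (0:ℝ) < ‖f x‖ ^ 2 := by positivity
    have h3 : HasDerivAt (fun t : ℝ => t ^ (p/2)) ((p/2) * (‖f x‖^2) ^ (p/2 - 1)) (‖f x‖^2) :=
      Real.hasDerivAt_rpow_const (Or.inl (ne_of_gt hsq))
    have h4 := h3.comp_hasFDerivAt x h2
    have hfun : (fun y => (‖f y‖ ^ 2 : ℝ) ^ (p/2)) = (fun y => ‖f y‖ ^ p) := by
      funext y
      rw [← Real.rpow_natCast ‖f y‖ 2, ← Real.rpow_mul (norm_nonneg _)]
      congr 1
      ring
    have hder : ((p/2) * (‖f x‖^2) ^ (p/2 - 1)) • (2 • ((innerSL ℝ (f x)).comp (fderiv ℝ f x)))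
        = (p * ‖f x‖ ^ (p - 2)) • ((innerSL ℝ (f x)).comp (fderiv ℝ f x)) := by
      ext v
      have hid : ((‖f x‖:ℝ)^2 : ℝ) ^ (p/2 - 1) = ‖f x‖ ^ (p - 2) := by
        rw [← Real.rpow_natCast ‖f x‖ 2, ← Real.rpow_mul (norm_nonneg _)]
        congr 1
        ring
      simp only [ContinuousLinearMap.smul_apply, ContinuousLinearMap.coe_smul', Pi.smul_apply,
        smul_eq_mul, nsmul_eq_mul, Nat.cast_ofNat, hid]
      ring
    rw [← hfun, ← hder]
    exact h4
lemma aux_cont {f : E → ℂ} {g : E → ℂ} (hf : Continuous f) (hg : Continuous g)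
    {p : ℝ} (hp : 1 < p) :
    Continuous fun x => ‖f x‖ ^ (p - 2) * (inner ℝ (f x) (g x) : ℝ) := by
  rw [continuous_iff_continuousAt]
  intro x₀
  by_cases hx : f x₀ = 0
  · have hbound : ∀ x, ‖‖f x‖ ^ (p - 2) * (inner ℝ (f x) (g x) : ℝ)‖
        ≤ ‖f x‖ ^ (p - 1) * ‖g x‖ := by
      intro x
      by_cases h : f x = 0
      · simp [h, Real.zero_rpow (by linarith : p - 1 ≠ 0)]
      · have h1 : |(inner ℝ (f x) (g x) : ℝ)| ≤ ‖f x‖ * ‖g x‖ := abs_real_inner_le_norm _ _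
        have h2 : (0:ℝ) ≤ ‖f x‖ ^ (p - 2) := Real.rpow_nonneg (norm_nonneg _) _
        rw [Real.norm_eq_abs, abs_mul, abs_of_nonneg h2]
        calc ‖f x‖ ^ (p - 2) * |(inner ℝ (f x) (g x) : ℝ)|
            ≤ ‖f x‖ ^ (p - 2) * (‖f x‖ * ‖g x‖) := by
              exact mul_le_mul_of_nonneg_left h1 h2
          _ = ‖f x‖ ^ (p - 1) * ‖g x‖ := by
              rw [← mul_assoc]
              congr 1
              rw [← Real.rpow_add_one (norm_ne_zero_iff.2 h)]
              ring_nf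
    have hb : Tendsto (fun x => ‖f x‖ ^ (p - 1) * ‖g x‖) (nhds x₀) (nhds 0) := by
      have hc : Tendsto (fun x => ‖f x‖) (nhds x₀) (nhds 0) := by
        simpa [hx] using (hf.norm.tendsto x₀)
      have hr : Tendsto (fun t : ℝ => t ^ (p - 1)) (nhds 0) (nhds 0) := by
        have := (Real.continuousAt_rpow_const 0 (p-1) (Or.inr (by linarith))).tendsto
        simpa [Real.zero_rpow (by linarith : p - 1 ≠ 0)] using this
      have := (hr.comp hc).mul (hg.norm.tendsto x₀)
      simpa using this
    have h0 : Tendsto (fun x => ‖f x‖ ^ (p - 2) * (inner ℝ (f x) (g x) : ℝ)) (nhds x₀)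
        (nhds 0) := squeeze_zero_norm hbound hb
    have : (‖f x₀‖ ^ (p - 2) * (inner ℝ (f x₀) (g x₀) : ℝ)) = 0 := by
      simp [hx]
    unfold ContinuousAt
    simp only [this]
    exact h0
  · exact (((hf.norm.continuousAt).rpow_const (Or.inl (norm_ne_zero_iff.2 hx))).mul
      ((hf.inner hg).continuousAt))
end aux

section aux3
variable {n : ℕ}

lemma aux_contck {K : Set (EuclideanSpace ℝ (Fin n))} (hK : IsCompact K)
    (h0K : (0 : EuclideanSpace ℝ (Fin n)) ∉ K) (s : ℝ)
    {g : EuclideanSpace ℝ (Fin n) → ℝ} (hg : Continuous g) (hgK : ∀ x ∉ K, g x = 0) :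
    Continuous (fun x : EuclideanSpace ℝ (Fin n) => ‖x‖ ^ s * g x) ∧
      HasCompactSupport (fun x : EuclideanSpace ℝ (Fin n) => ‖x‖ ^ s * g x) := by
  constructor
  · rw [continuous_iff_continuousAt]
    intro x₀
    by_cases hx : x₀ = 0
    · subst hx
      have hnb : Kᶜ ∈ nhds (0 : EuclideanSpace ℝ (Fin n)) :=
        hK.isClosed.isOpen_compl.mem_nhds h0K
      have : (fun x : EuclideanSpace ℝ (Fin n) => ‖x‖ ^ s * g x) =ᶠ[nhds 0] (fun _ => 0) := by
        filter_upwards [hnb] with x hx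
        simp [hgK x hx]
      exact ContinuousAt.congr continuousAt_const this.symm
    · exact ((continuous_norm.continuousAt).rpow_const
        (Or.inl (norm_ne_zero_iff.2 hx))).mul hg.continuousAt
  · apply HasCompactSupport.intro hK
    intro x hx
    simp [hgK x hx]
lemma aux_integrable {K : Set (EuclideanSpace ℝ (Fin n))} (hK : IsCompact K)
    (h0K : (0 : EuclideanSpace ℝ (Fin n)) ∉ K) (s : ℝ)
    {g : EuclideanSpace ℝ (Fin n) → ℝ} (hg : Continuous g) (hgK : ∀ x ∉ K, g x = 0) :
    Integrable (fun x : EuclideanSpace ℝ (Fin n) => ‖x‖ ^ s * g x) volume := by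
  obtain ⟨h1, h2⟩ := aux_contck hK h0K s hg hgK
  exact h1.integrable_of_hasCompactSupport h2
lemma aux_memLp {K : Set (EuclideanSpace ℝ (Fin n))} (hK : IsCompact K)
    (h0K : (0 : EuclideanSpace ℝ (Fin n)) ∉ K) (s : ℝ)
    {g : EuclideanSpace ℝ (Fin n) → ℝ} (hg : Continuous g) (hgK : ∀ x ∉ K, g x = 0)
    (e : ENNReal) :
    MemLp (fun x : EuclideanSpace ℝ (Fin n) => ‖x‖ ^ s * g x) e volume := by
  obtain ⟨h1, h2⟩ := aux_contck hK h0K s hg hgK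
  exact h1.memLp_of_hasCompactSupport (μ := volume) h2

-- Cauchy-Schwarz: ‖L x‖ ≤ ‖x‖ * sqrt (∑ ‖L eᵢ‖²)
lemma aux_cs (L : EuclideanSpace ℝ (Fin n) →L[ℝ] ℂ) (x : EuclideanSpace ℝ (Fin n)) :
    ‖L x‖ ≤ ‖x‖ * Real.sqrt (∑ i, ‖L (EuclideanSpace.single i (1:ℝ))‖ ^ 2) := by
  have hx : x = ∑ i, x i • EuclideanSpace.single i (1:ℝ) := by
    apply PiLp.ext
    intro j
    rw [WithLp.ofLp_sum, Finset.sum_apply]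
    simp [EuclideanSpace.single_apply, PiLp.smul_apply]
  calc ‖L x‖ = ‖∑ i, x i • L (EuclideanSpace.single i (1:ℝ))‖ := by
        conv_lhs => rw [hx]
        rw [map_sum]
        simp [_root_.map_smul]
    _ ≤ ∑ i, ‖x i‖ * ‖L (EuclideanSpace.single i (1:ℝ))‖ := by
        refine (norm_sum_le _ _).trans ?_
        apply le_of_eq
        congr 1
        funext i
        rw [norm_smul]
    _ ≤ Real.sqrt (∑ i, ‖x i‖ ^ 2) * Real.sqrt (∑ i, ‖L (EuclideanSpace.single i (1:ℝ))‖ ^ 2) := by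
        exact Real.sum_mul_le_sqrt_mul_sqrt Finset.univ _ _
    _ = ‖x‖ * Real.sqrt (∑ i, ‖L (EuclideanSpace.single i (1:ℝ))‖ ^ 2) := by
        rw [EuclideanSpace.norm_eq]
set_option maxHeartbeats 2000000 in
lemma aux_hardy {p a : ℝ} (hp : 1 < p) (hna : (n:ℝ) + p * (a - 1) ≠ 0)
    (f : EuclideanSpace ℝ (Fin n) → ℂ) (hf : ContDiff ℝ (⊤ : ℕ∞) f)
    (hsupp : HasCompactSupport f)
    (h0 : (0 : EuclideanSpace ℝ (Fin n)) ∉ tsupport f) :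
    (∫ x : EuclideanSpace ℝ (Fin n), (‖x‖ ^ (a-1) * ‖f x‖) ^ p) ^ (1/p)
      ≤ |p / ((n:ℝ) + p * (a-1))| *
        (∫ x : EuclideanSpace ℝ (Fin n), (‖x‖ ^ a *
          Real.sqrt (∑ i, ‖fderiv ℝ f x (EuclideanSpace.single i (1:ℝ))‖ ^ 2)) ^ p) ^ (1/p) := by
  classical
  have hp0 : (0:ℝ) < p := by linarith
  have hdiff : Differentiable ℝ f := hf.differentiable (by simp)
  have hfc : Continuous f := hf.continuous
  have hfdc : Continuous (fderiv ℝ f) := hf.continuous_fderiv (by simp)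
  set β : ℝ := p * (a - 1) with hβ
  set grad : EuclideanSpace ℝ (Fin n) → ℝ :=
    fun x => Real.sqrt (∑ i, ‖fderiv ℝ f x (EuclideanSpace.single i (1:ℝ))‖ ^ 2) with hgrad
  have hK : IsCompact (tsupport f) := hsupp
  -- small ball around 0 avoiding the support
  obtain ⟨ε, hε, hball⟩ : ∃ ε > 0, Metric.ball (0 : EuclideanSpace ℝ (Fin n)) ε ⊆ (tsupport f)ᶜ :=
    Metric.mem_nhds_iff.1 ((isClosed_tsupport f).isOpen_compl.mem_nhds h0)
  have hKout : ∀ x ∈ tsupport f, ε ≤ ‖x‖ := by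
    intro x hx
    by_contra h
    push_neg at h
    exact hball (by simpa [Metric.mem_ball, dist_zero_right] using h) hx
  -- cutoff
  set φ : ContDiffBump (0 : EuclideanSpace ℝ (Fin n)) :=
    ⟨ε/2, 2*ε/3, by positivity, by linarith⟩ with hφ
  set θ : EuclideanSpace ℝ (Fin n) → ℝ := fun y => (1 - φ y) * ‖y‖ ^ β with hθ
  have hφK : ∀ x ∈ tsupport f, φ x = 0 := by
    intro x hx
    have h1 : x ∉ Function.support φ := by
      rw [φ.support_eq]
      simp only [Metric.mem_ball, dist_zero_right, not_lt]
      have := hKout x hx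
      calc 2*ε/3 ≤ ε := by linarith
        _ ≤ ‖x‖ := this
    exact Function.notMem_support.1 h1
  have hθK : ∀ x ∈ tsupport f, θ x = ‖x‖ ^ β := by
    intro x hx
    rw [hθ]
    simp [hφK x hx]
  have hθdiff : ∀ x, DifferentiableAt ℝ θ x := by
    intro x
    by_cases hx : x = 0
    · subst hx
      have hev : θ =ᶠ[nhds (0 : EuclideanSpace ℝ (Fin n))] (fun _ => (0:ℝ)) := by
        filter_upwards [Metric.ball_mem_nhds (0 : EuclideanSpace ℝ (Fin n))
          (by positivity : (0:ℝ) < ε/2)] with y hy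
        have : φ y = 1 := φ.one_of_mem_closedBall (Metric.ball_subset_closedBall hy)
        simp [hθ, this]
      exact (differentiableAt_const (0:ℝ)).congr_of_eventuallyEq hev
    · apply DifferentiableAt.mul
      · exact (differentiableAt_const (1:ℝ)).sub ((φ.contDiff (n := 1)).differentiable one_ne_zero x)
      · exact ((contDiffAt_norm (𝕜 := ℝ) hx).differentiableAt one_ne_zero).rpow_const
          (Or.inl (norm_ne_zero_iff.2 hx))
  -- derivative of θ on the support
  have hDθ : ∀ x ∈ tsupport f,
      HasFDerivAt θ ((β * ‖x‖ ^ (β - 2)) • (innerSL ℝ x)) x := by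
    intro x hx
    have hxε : ε ≤ ‖x‖ := hKout x hx
    have hx0 : x ≠ 0 := by
      intro h; rw [h] at hxε; simp at hxε; linarith
    have hxpos : (0:ℝ) < ‖x‖ := norm_pos_iff.2 hx0
    have hev : θ =ᶠ[nhds x] (fun z => ‖z‖ ^ β) := by
      have hopen : IsOpen {z : EuclideanSpace ℝ (Fin n) | 2*ε/3 < ‖z‖} :=
        isOpen_lt continuous_const continuous_norm
      have hmem : x ∈ {z : EuclideanSpace ℝ (Fin n) | 2*ε/3 < ‖z‖} := by
        simp only [Set.mem_setOf_eq]; linarith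
      filter_upwards [hopen.mem_nhds hmem] with z hz
      have hφz : φ z = 0 := by
        apply Function.notMem_support.1
        rw [φ.support_eq]
        simp only [Metric.mem_ball, dist_zero_right, not_lt]
        exact le_of_lt hz
      simp [hθ, hφz]
    have hq : HasFDerivAt (fun z : EuclideanSpace ℝ (Fin n) => ‖z‖ ^ 2)
        (2 • (innerSL ℝ x)) x := by
      have := (hasFDerivAt_id x).norm_sq
      simpa using this
    have hsq : (0:ℝ) < ‖x‖ ^ 2 := by positivity
    have h3 : HasDerivAt (fun t : ℝ => t ^ (β/2)) ((β/2) * (‖x‖^2) ^ (β/2 - 1)) (‖x‖^2) :=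
      Real.hasDerivAt_rpow_const (Or.inl (ne_of_gt hsq))
    have h4 := h3.comp_hasFDerivAt x hq
    have hfun : ((fun t : ℝ => t ^ (β/2)) ∘ fun z : EuclideanSpace ℝ (Fin n) => ‖z‖ ^ 2)
        = fun z : EuclideanSpace ℝ (Fin n) => ‖z‖ ^ β := by
      funext z
      simp only [Function.comp_apply]
      rw [← Real.rpow_natCast ‖z‖ 2, ← Real.rpow_mul (norm_nonneg _)]
      congr 1
      ring
    have hder : ((β/2) * (‖x‖^2) ^ (β/2 - 1)) • (2 • (innerSL ℝ x))
        = (β * ‖x‖ ^ (β - 2)) • (innerSL ℝ x) := by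
      ext v
      have hid : ((‖x‖:ℝ)^2) ^ (β/2 - 1) = ‖x‖ ^ (β - 2) := by
        rw [← Real.rpow_natCast ‖x‖ 2, ← Real.rpow_mul (norm_nonneg _)]
        congr 1
        ring
      simp only [ContinuousLinearMap.smul_apply, ContinuousLinearMap.coe_smul', Pi.smul_apply,
        smul_eq_mul, nsmul_eq_mul, Nat.cast_ofNat, hid]
      ring
    rw [hfun, hder] at h4
    exact h4.congr_of_eventuallyEq hev
  -- F and its derivative D
  set F : EuclideanSpace ℝ (Fin n) → ℝ := fun y => ‖f y‖ ^ p with hF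
  set D : EuclideanSpace ℝ (Fin n) → (EuclideanSpace ℝ (Fin n) →L[ℝ] ℝ) :=
    fun x => (p * ‖f x‖ ^ (p - 2)) • ((innerSL ℝ (f x)).comp (fderiv ℝ f x)) with hD
  have hDF : ∀ x, HasFDerivAt F (D x) x := fun x => aux_hasFDerivAt_norm_rpow hdiff hp x
  have hFdiff : Differentiable ℝ F := fun x => (hDF x).differentiableAt
  have hfD : ∀ x, fderiv ℝ F x = D x := fun x => (hDF x).fderiv
  have hD0 : ∀ x, x ∉ tsupport f → D x = 0 := by
    intro x hx
    have hfx : f x = 0 := image_eq_zero_of_notMem_tsupport hx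
    rw [hD]
    simp [hfx]
  have hDapp : ∀ x v, D x v = p * (‖f x‖ ^ (p - 2) * (inner ℝ (f x) (fderiv ℝ f x v) : ℝ)) := by
    intro x v
    rw [hD]
    simp only [ContinuousLinearMap.smul_apply, ContinuousLinearMap.coe_comp',
      Function.comp_apply, innerSL_apply_apply, smul_eq_mul]
    ring
  have hF0 : ∀ x, x ∉ tsupport f → F x = 0 := by
    intro x hx
    rw [hF]
    simp [image_eq_zero_of_notMem_tsupport hx, Real.zero_rpow (ne_of_gt hp0)]
  have hFc : Continuous F := by
    rw [hF]
    rw [continuous_iff_continuousAt]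
    intro x
    exact (Real.continuousAt_rpow_const _ _ (Or.inr (le_of_lt hp0))).comp
      hfc.norm.continuousAt
  have hgradc : Continuous grad := by
    rw [hgrad]
    apply Real.continuous_sqrt.comp
    apply continuous_finset_sum
    intro i _
    exact ((hfdc.clm_apply continuous_const).norm.pow 2)
  have hgrad0 : ∀ x, x ∉ tsupport f → grad x = 0 := by
    intro x hx
    have hev : f =ᶠ[nhds x] (fun _ => (0:ℂ)) := by
      filter_upwards [(isClosed_tsupport f).isOpen_compl.mem_nhds hx] with y hy
      exact image_eq_zero_of_notMem_tsupport hy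
    have hfd0 : fderiv ℝ f x = 0 := by
      rw [hev.fderiv_eq]
      exact fderiv_const_apply 0
    rw [hgrad]
    simp [hfd0]
  have hgradnn : ∀ x, 0 ≤ grad x := fun x => Real.sqrt_nonneg _
  set pr : Fin n → (EuclideanSpace ℝ (Fin n) →L[ℝ] ℝ) :=
    fun i => EuclideanSpace.proj i with hpr
  set e : Fin n → EuclideanSpace ℝ (Fin n) := fun i => EuclideanSpace.single i (1:ℝ) with he
  set m : Fin n → EuclideanSpace ℝ (Fin n) → ℝ := fun i y => θ y * pr i y with hm
  have hmdiff : ∀ i, Differentiable ℝ (m i) := by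
    intro i x
    exact (hθdiff x).mul (pr i).differentiableAt
  have hDm : ∀ i, ∀ x ∈ tsupport f, HasFDerivAt (m i)
      (θ x • pr i + pr i x • ((β * ‖x‖ ^ (β - 2)) • (innerSL ℝ x))) x := by
    intro i x hx
    exact (hDθ x hx).mul ((pr i).hasFDerivAt)
  have hprx : ∀ (i) (x : EuclideanSpace ℝ (Fin n)), pr i x = x i := fun i x => rfl
  have hpre : ∀ i, pr i (e i) = 1 := by
    intro i
    rw [hprx, he]
    simp [EuclideanSpace.single_apply]
  have hinner_e : ∀ (i) (x : EuclideanSpace ℝ (Fin n)), (inner ℝ x (e i) : ℝ) = x i := by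
    intro i x
    rw [he]
    simp [EuclideanSpace.inner_single_right]
  have hxpos : ∀ x ∈ tsupport f, (0:ℝ) < ‖x‖ := by
    intro x hx
    calc (0:ℝ) < ε := hε
      _ ≤ ‖x‖ := hKout x hx
  have hDm_e : ∀ i, ∀ x ∈ tsupport f,
      fderiv ℝ (m i) x (e i) = ‖x‖ ^ β + β * ‖x‖ ^ (β - 2) * (x i * x i) := by
    intro i x hx
    rw [(hDm i x hx).fderiv]
    simp only [ContinuousLinearMap.add_apply, ContinuousLinearMap.smul_apply,
      smul_eq_mul, innerSL_apply_apply]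
    rw [hpre i, hinner_e i x, hprx, hθK x hx]
    ring
  have hI1 : ∀ i, Integrable (fun x => m i x * D x (e i)) volume := by
    intro i
    have heq : (fun x : EuclideanSpace ℝ (Fin n) => m i x * D x (e i))
        = fun x => ‖x‖ ^ β * (x i * D x (e i)) := by
      funext x
      by_cases hx : x ∈ tsupport f
      · rw [hm]
        simp only []
        rw [hθK x hx, hprx]
        ring
      · rw [hD0 x hx]
        simp
    rw [heq]
    apply aux_integrable hK h0 β
    · have hDcont : Continuous (fun x => D x (e i)) := by
        have h7 : (fun x => D x (e i)) = fun x =>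
            p * (‖f x‖ ^ (p - 2) * (inner ℝ (f x) (fderiv ℝ f x (e i)) : ℝ)) :=
          funext fun x => hDapp x (e i)
        rw [h7]
        exact continuous_const.mul (aux_cont hfc (hfdc.clm_apply continuous_const) hp)
      exact ((pr i).continuous).mul hDcont
    · intro x hx
      rw [hD0 x hx]
      simp
  have hI2 : ∀ i, Integrable (fun x => fderiv ℝ (m i) x (e i) * F x) volume := by
    intro i
    have heq : (fun x : EuclideanSpace ℝ (Fin n) => fderiv ℝ (m i) x (e i) * F x)
        = fun x => ‖x‖ ^ (β - 2) * ((‖x‖ ^ 2 + β * (x i * x i)) * F x) := by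
      funext x
      by_cases hx : x ∈ tsupport f
      · rw [hDm_e i x hx]
        have hb : ‖x‖ ^ β = ‖x‖ ^ (β - 2) * ‖x‖ ^ 2 := by
          rw [← Real.rpow_natCast ‖x‖ 2, ← Real.rpow_add (hxpos x hx)]
          congr 1
          ring
        rw [hb]
        ring
      · simp [hF0 x hx]
    rw [heq]
    apply aux_integrable hK h0 (β - 2)
    · exact ((continuous_norm.pow 2).add
        (continuous_const.mul (((pr i).continuous).mul (pr i).continuous))).mul hFc
    · intro x hx
      rw [hF0 x hx]
      ring
  have hI3 : ∀ i, Integrable (fun x => m i x * F x) volume := by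
    intro i
    have heq : (fun x : EuclideanSpace ℝ (Fin n) => m i x * F x)
        = fun x => ‖x‖ ^ β * (x i * F x) := by
      funext x
      by_cases hx : x ∈ tsupport f
      · rw [hm]
        simp only []
        rw [hθK x hx, hprx]
        ring
      · simp [hF0 x hx]
    rw [heq]
    apply aux_integrable hK h0 β
    · exact ((pr i).continuous).mul hFc
    · intro x hx
      rw [hF0 x hx]
      ring
  have key : ∀ i, ∫ x, m i x * D x (e i) = - ∫ x, fderiv ℝ (m i) x (e i) * F x := by
    intro i
    have h8 : Integrable (fun x => m i x * fderiv ℝ F x (e i)) volume := by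
      simp only [hfD]
      exact hI1 i
    have h9 := integral_mul_fderiv_eq_neg_fderiv_mul_of_integrable (hI2 i) h8 (hI3 i)
      (fun x _ => hmdiff i x) (fun x _ => hFdiff x)
    simpa only [hfD] using h9
  have hxsum : ∀ x : EuclideanSpace ℝ (Fin n), ∑ i, x i • e i = x := by
    intro x
    apply PiLp.ext
    intro j
    rw [WithLp.ofLp_sum, Finset.sum_apply]
    simp [he, EuclideanSpace.single_apply, PiLp.smul_apply]
  have hDxx : ∀ x : EuclideanSpace ℝ (Fin n), D x x = ∑ i, x i * D x (e i) := by
    intro x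
    have h1 : D x x = D x (∑ i, x i • e i) := (congrArg (D x) (hxsum x)).symm
    rw [h1, map_sum]
    simp only [_root_.map_smul, smul_eq_mul]
  have hsum1 : ∫ x, θ x * D x x = ∑ i, ∫ x, m i x * D x (e i) := by
    rw [← integral_finset_sum Finset.univ (fun i _ => hI1 i)]
    refine integral_congr_ae (Filter.Eventually.of_forall fun x => ?_)
    show θ x * D x x = ∑ i, m i x * D x (e i)
    rw [hDxx x, Finset.mul_sum]
    refine Finset.sum_congr rfl fun i _ => ?_
    rw [hm]
    simp only []
    rw [hprx]
    ring
  have hsum2 : ∑ i, ∫ x, fderiv ℝ (m i) x (e i) * F x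
      = ∫ x, ((n:ℝ) + β) * (‖x‖ ^ β * F x) := by
    rw [← integral_finset_sum Finset.univ (fun i _ => hI2 i)]
    refine integral_congr_ae (Filter.Eventually.of_forall fun x => ?_)
    by_cases hx : x ∈ tsupport f
    · have hss : (∑ i, x i * x i) = ‖x‖ ^ 2 := by
        have h1 := real_inner_self_eq_norm_sq x
        rw [← h1, PiLp.inner_apply]
        simp [RCLike.inner_apply, sq]
      have hb : ‖x‖ ^ (β - 2) * ‖x‖ ^ 2 = ‖x‖ ^ β := by
        rw [← Real.rpow_natCast ‖x‖ 2, ← Real.rpow_add (hxpos x hx)]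
        congr 1
        ring
      calc (∑ i, fderiv ℝ (m i) x (e i) * F x)
          = ∑ i, (‖x‖ ^ β + β * ‖x‖ ^ (β - 2) * (x i * x i)) * F x :=
            Finset.sum_congr rfl (fun i _ => by rw [hDm_e i x hx])
        _ = ((n:ℝ) * ‖x‖ ^ β + β * ‖x‖ ^ (β - 2) * (∑ i, x i * x i)) * F x := by
            rw [← Finset.sum_mul]
            congr 1
            rw [Finset.sum_add_distrib, Finset.sum_const, Finset.card_univ, Fintype.card_fin,
              ← Finset.mul_sum]
            push_cast
            ring
        _ = ((n:ℝ) + β) * (‖x‖ ^ β * F x) := by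
            rw [hss]
            linear_combination (β * F x) * hb
    · simp [hF0 x hx]
  have hmain : ∫ x, θ x * D x x = -(((n:ℝ) + β) * ∫ x, ‖x‖ ^ β * F x) := by
    rw [hsum1]
    calc ∑ i, ∫ x, m i x * D x (e i)
        = ∑ i, -(∫ x, fderiv ℝ (m i) x (e i) * F x) := Finset.sum_congr rfl fun i _ => key i
      _ = -(∑ i, ∫ x, fderiv ℝ (m i) x (e i) * F x) := by rw [← Finset.sum_neg_distrib]
      _ = -(∫ x, ((n:ℝ) + β) * (‖x‖ ^ β * F x)) := by rw [hsum2]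
      _ = -(((n:ℝ) + β) * ∫ x, ‖x‖ ^ β * F x) := by rw [integral_const_mul]
  set G : ℝ := ∫ x : EuclideanSpace ℝ (Fin n), (‖x‖ ^ (a-1) * ‖f x‖) ^ p with hG
  set A : ℝ := ∫ x : EuclideanSpace ℝ (Fin n), (‖x‖ ^ a * grad x) ^ p with hA
  have hGalt : ∫ x : EuclideanSpace ℝ (Fin n), ‖x‖ ^ β * F x = G := by
    rw [hG]
    refine integral_congr_ae (Filter.Eventually.of_forall fun x => ?_)
    show ‖x‖ ^ β * F x = (‖x‖ ^ (a-1) * ‖f x‖) ^ p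
    rw [hF]
    simp only []
    rw [Real.mul_rpow (Real.rpow_nonneg (norm_nonneg x) _) (norm_nonneg (f x)),
      ← Real.rpow_mul (norm_nonneg x)]
    congr 2
    rw [hβ]
    ring
  have hcs : ∀ x : EuclideanSpace ℝ (Fin n), ‖fderiv ℝ f x x‖ ≤ ‖x‖ * grad x := by
    intro x
    simp only [hgrad]
    exact aux_cs (fderiv ℝ f x) x
  have hDble : ∀ x, |D x x| ≤ p * (‖f x‖ ^ (p-1) * (‖x‖ * grad x)) := by
    intro x
    rw [hDapp x x]
    rw [abs_mul, abs_of_pos hp0]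
    apply mul_le_mul_of_nonneg_left _ (le_of_lt hp0)
    rw [abs_mul, abs_of_nonneg (Real.rpow_nonneg (norm_nonneg _) _)]
    by_cases hfx : f x = 0
    · simp [hfx, Real.zero_rpow (show p - 1 ≠ 0 by linarith)]
    · have hrnn : (0:ℝ) ≤ ‖f x‖ ^ (p-2) := Real.rpow_nonneg (norm_nonneg _) _
      have hstep : ‖f x‖ ^ (p-1) = ‖f x‖ ^ (p-2) * ‖f x‖ := by
        rw [← Real.rpow_add_one (norm_ne_zero_iff.2 hfx)]
        congr 1
        ring
      calc ‖f x‖ ^ (p-2) * |(inner ℝ (f x) (fderiv ℝ f x x) : ℝ)|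
          ≤ ‖f x‖ ^ (p-2) * (‖f x‖ * ‖fderiv ℝ f x x‖) :=
            mul_le_mul_of_nonneg_left (abs_real_inner_le_norm _ _) hrnn
        _ ≤ ‖f x‖ ^ (p-2) * (‖f x‖ * (‖x‖ * grad x)) := by
            apply mul_le_mul_of_nonneg_left _ hrnn
            exact mul_le_mul_of_nonneg_left (hcs x) (norm_nonneg _)
        _ = ‖f x‖ ^ (p-1) * (‖x‖ * grad x) := by
            rw [hstep]
            ring
  have hItD : Integrable (fun x => θ x * D x x) volume := by
    have heq : (fun x : EuclideanSpace ℝ (Fin n) => θ x * D x x)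
        = fun x => ‖x‖ ^ β * (D x x) := by
      funext x
      by_cases hx : x ∈ tsupport f
      · rw [hθK x hx]
      · rw [hD0 x hx]
        simp
    rw [heq]
    apply aux_integrable hK h0 β
    · have h7 : (fun x => D x x) = fun x =>
          p * (‖f x‖ ^ (p - 2) * (inner ℝ (f x) (fderiv ℝ f x x) : ℝ)) :=
        funext fun x => hDapp x x
      rw [h7]
      exact continuous_const.mul (aux_cont hfc (hfdc.clm_apply continuous_id) hp)
    · intro x hx
      rw [hD0 x hx]
      simp
  have hfp1c : Continuous fun x : EuclideanSpace ℝ (Fin n) => ‖f x‖ ^ (p-1) := by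
    rw [continuous_iff_continuousAt]
    intro x
    exact (Real.continuousAt_rpow_const _ _ (Or.inr (by linarith))).comp hfc.norm.continuousAt
  set W : EuclideanSpace ℝ (Fin n) → ℝ :=
    fun x => (‖x‖ ^ (a-1) * ‖f x‖) ^ (p-1) * (‖x‖ ^ a * grad x) with hW
  have heqW : W = fun x => ‖x‖ ^ (β + 1) * (‖f x‖ ^ (p-1) * grad x) := by
    funext x
    rw [hW]
    simp only []
    by_cases hx : x = 0
    · subst hx
      have hf0 : f 0 = 0 := image_eq_zero_of_notMem_tsupport h0
      have hg0 : grad 0 = 0 := hgrad0 0 h0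
      rw [hf0, hg0]
      simp only [mul_zero]
    · have hxp : (0:ℝ) < ‖x‖ := norm_pos_iff.2 hx
      rw [Real.mul_rpow (Real.rpow_nonneg (norm_nonneg x) _) (norm_nonneg (f x)),
        ← Real.rpow_mul (norm_nonneg x)]
      rw [show β + 1 = (a-1)*(p-1) + a by rw [hβ]; ring, Real.rpow_add hxp]
      ring
  have hIW : Integrable W volume := by
    rw [heqW]
    apply aux_integrable hK h0 (β + 1)
    · exact hfp1c.mul hgradc
    · intro x hx
      rw [hgrad0 x hx]
      ring
  have hGnn : (0:ℝ) ≤ G := by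
    rw [hG]
    apply integral_nonneg
    intro x
    positivity
  have hAnn : (0:ℝ) ≤ A := by
    rw [hA]
    apply integral_nonneg
    intro x
    apply Real.rpow_nonneg
    exact mul_nonneg (Real.rpow_nonneg (norm_nonneg _) _) (hgradnn x)
  have hθble : ∀ x, |θ x * D x x| ≤ p * W x := by
    intro x
    by_cases hx : x = 0
    · subst hx
      have hφ0 : φ 0 = 1 := φ.one_of_mem_closedBall (by
        simp only [Metric.mem_closedBall, dist_self]
        positivity)
      have hθ0 : θ 0 = 0 := by
        rw [hθ]
        simp [hφ0]
      rw [hθ0]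
      have hW0 : W 0 = 0 := by
        rw [hW]
        simp only []
        rw [hgrad0 0 h0]
        ring
      rw [hW0]
      simp
    · have hxp : (0:ℝ) < ‖x‖ := norm_pos_iff.2 hx
      have hθabs : |θ x| ≤ ‖x‖ ^ β := by
        rw [hθ]
        simp only []
        rw [abs_mul, abs_of_nonneg (Real.rpow_nonneg (norm_nonneg x) β)]
        have h1 : |1 - φ x| ≤ 1 := by
          rw [abs_le]
          constructor
          · have := φ.le_one (x := x)
            linarith
          · have := φ.nonneg (x := x)
            linarith
        calc |1 - φ x| * ‖x‖ ^ β ≤ 1 * ‖x‖ ^ β :=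
              mul_le_mul_of_nonneg_right h1 (Real.rpow_nonneg (norm_nonneg x) β)
          _ = ‖x‖ ^ β := one_mul _
      calc |θ x * D x x| = |θ x| * |D x x| := abs_mul _ _
        _ ≤ ‖x‖ ^ β * |D x x| := mul_le_mul_of_nonneg_right hθabs (abs_nonneg _)
        _ ≤ ‖x‖ ^ β * (p * (‖f x‖ ^ (p-1) * (‖x‖ * grad x))) :=
            mul_le_mul_of_nonneg_left (hDble x) (Real.rpow_nonneg (norm_nonneg x) β)
        _ = p * W x := by
            rw [heqW]
            simp only []
            rw [show β + 1 = β + 1 from rfl, Real.rpow_add hxp β 1, Real.rpow_one]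
            ring
  have habs : |(n:ℝ) + β| * G ≤ p * ∫ x, W x := by
    have h1 : |∫ x, θ x * D x x| = |(n:ℝ) + β| * G := by
      rw [hmain, hGalt, abs_neg, abs_mul, abs_of_nonneg hGnn]
    have h2 : |∫ x, θ x * D x x| ≤ ∫ x, |θ x * D x x| := by
      have := norm_integral_le_integral_norm (μ := volume) (fun x => θ x * D x x)
      simpa only [Real.norm_eq_abs] using this
    have h3 : ∫ x, |θ x * D x x| ≤ ∫ x, p * W x :=
      integral_mono hItD.abs (hIW.const_mul p) hθble
    rw [integral_const_mul] at h3
    linarith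
  have hconj : Real.HolderConjugate (p/(p-1)) p := by
    rw [Real.holderConjugate_iff]
    constructor
    · rw [lt_div_iff₀ (by linarith : (0:ℝ) < p - 1)]
      linarith
    · rw [inv_div]
      field_simp
      ring
  have hmem1 : MemLp (fun x : EuclideanSpace ℝ (Fin n) => (‖x‖ ^ (a-1) * ‖f x‖) ^ (p-1))
      (ENNReal.ofReal (p/(p-1))) volume := by
    have heq : (fun x : EuclideanSpace ℝ (Fin n) => (‖x‖ ^ (a-1) * ‖f x‖) ^ (p-1))
        = fun x => ‖x‖ ^ ((a-1)*(p-1)) * ‖f x‖ ^ (p-1) := by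
      funext x
      rw [Real.mul_rpow (Real.rpow_nonneg (norm_nonneg x) _) (norm_nonneg (f x)),
        ← Real.rpow_mul (norm_nonneg x)]
    rw [heq]
    apply aux_memLp hK h0
    · exact hfp1c
    · intro x hx
      simp [image_eq_zero_of_notMem_tsupport hx,
        Real.zero_rpow (show p - 1 ≠ 0 by linarith)]
  have hmem2 : MemLp (fun x : EuclideanSpace ℝ (Fin n) => ‖x‖ ^ a * grad x)
      (ENNReal.ofReal p) volume := by
    apply aux_memLp hK h0
    · exact hgradc
    · intro x hx
      exact hgrad0 x hx
  have hholder := integral_mul_le_Lp_mul_Lq_of_nonneg hconj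
    (Filter.Eventually.of_forall fun x => Real.rpow_nonneg
      (mul_nonneg (Real.rpow_nonneg (norm_nonneg x) _) (norm_nonneg (f x))) _)
    (Filter.Eventually.of_forall fun x =>
      mul_nonneg (Real.rpow_nonneg (norm_nonneg x) _) (hgradnn x))
    hmem1 hmem2
  have hGid : ∫ x : EuclideanSpace ℝ (Fin n),
      ((‖x‖ ^ (a-1) * ‖f x‖) ^ (p-1)) ^ (p/(p-1)) = G := by
    rw [hG]
    refine integral_congr_ae (Filter.Eventually.of_forall fun x => ?_)
    show ((‖x‖ ^ (a-1) * ‖f x‖) ^ (p-1)) ^ (p/(p-1)) = (‖x‖ ^ (a-1) * ‖f x‖) ^ p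
    rw [← Real.rpow_mul (mul_nonneg (Real.rpow_nonneg (norm_nonneg x) _) (norm_nonneg (f x)))]
    congr 1
    rw [mul_div_assoc', mul_comm, mul_div_assoc]
    rw [div_self (show p - 1 ≠ 0 by linarith), mul_one]
  have hWle : ∫ x, W x ≤ G ^ ((p-1)/p) * A ^ (1/p) := by
    have h4 : (1:ℝ)/(p/(p-1)) = (p-1)/p := one_div_div _ _
    rw [hGid, h4, ← hA] at hholder
    calc ∫ x, W x
        = ∫ x : EuclideanSpace ℝ (Fin n),
            ((‖x‖ ^ (a-1) * ‖f x‖) ^ (p-1)) * (‖x‖ ^ a * grad x) := by rw [hW]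
      _ ≤ G ^ ((p-1)/p) * A ^ (1/p) := hholder
  have hfinal : |(n:ℝ) + β| * G ≤ p * (G ^ ((p-1)/p) * A ^ (1/p)) := by
    calc |(n:ℝ) + β| * G ≤ p * ∫ x, W x := habs
      _ ≤ p * (G ^ ((p-1)/p) * A ^ (1/p)) := mul_le_mul_of_nonneg_left hWle (le_of_lt hp0)
  have habsnb : 0 < |(n:ℝ) + β| := abs_pos.2 hna
  by_cases hG0 : G = 0
  · rw [hG0, Real.zero_rpow (ne_of_gt (by positivity : (0:ℝ) < 1/p))]
    have : (0:ℝ) ≤ A ^ (1/p) := Real.rpow_nonneg hAnn _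
    positivity
  · have hGpos : 0 < G := lt_of_le_of_ne hGnn (Ne.symm hG0)
    have hsplit : G = G ^ ((p-1)/p) * G ^ (1/p) := by
      rw [← Real.rpow_add hGpos]
      rw [show (p-1)/p + 1/p = 1 by field_simp; ring]
      exact (Real.rpow_one G).symm
    have hfac : 0 < G ^ ((p-1)/p) := Real.rpow_pos_of_pos hGpos _
    have h5 : |(n:ℝ) + β| * G ^ (1/p) ≤ p * A ^ (1/p) := by
      have h6 : G ^ ((p-1)/p) * (|(n:ℝ) + β| * G ^ (1/p))
          ≤ G ^ ((p-1)/p) * (p * A ^ (1/p)) := by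
        calc G ^ ((p-1)/p) * (|(n:ℝ) + β| * G ^ (1/p))
            = |(n:ℝ) + β| * (G ^ ((p-1)/p) * G ^ (1/p)) := by ring
          _ = |(n:ℝ) + β| * G := by rw [← hsplit]
          _ ≤ p * (G ^ ((p-1)/p) * A ^ (1/p)) := hfinal
          _ = G ^ ((p-1)/p) * (p * A ^ (1/p)) := by ring
      exact le_of_mul_le_mul_left h6 hfac
    rw [abs_div, abs_of_pos hp0, div_mul_eq_mul_div, le_div_iff₀ habsnb]
    calc G ^ (1/p) * |(n:ℝ) + β| = |(n:ℝ) + β| * G ^ (1/p) := by ring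
      _ ≤ p * A ^ (1/p) := h5

end aux3

set_option maxHeartbeats 1000000 in
/-- Caffarelli–Kohn–Nirenberg type inequality (Euclidean case of Theorem 4.1):
`‖|x|^c f‖_{L^r} ≤ |p/(n+p(a-1))|^δ ‖|x|^a |∇f|‖_{L^p}^δ ‖|x|^b f‖_{L^q}^{1-δ}`
for `f ∈ C₀^∞(ℝⁿ \ {0})`, where `|∇f(x)| = (Σᵢ |∂ᵢf(x)|²)^{1/2}`. -/
theorem stmt_10 (n : ℕ) (hn : 1 ≤ n) (p q r δ a b c : ℝ)
    (hp : 1 < p) (hq : 1 < q) (hr : 0 < r) (hpqr : r ≤ p + q)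
    (hδ0 : 0 ≤ δ) (hδ1 : δ ≤ 1) (hδl : (r - q) / r ≤ δ) (hδu : δ ≤ p / r)
    (h1 : δ * r / p + (1 - δ) * r / q = 1)
    (hc : c = δ * (a - 1) + b * (1 - δ))
    (hna : (n : ℝ) ≠ p * (1 - a))
    (f : EuclideanSpace ℝ (Fin n) → ℂ)
    (hf : ContDiff ℝ (⊤ : ℕ∞) f) (hsupp : HasCompactSupport f)
    (h0 : (0 : EuclideanSpace ℝ (Fin n)) ∉ tsupport f) :
    (∫ x : EuclideanSpace ℝ (Fin n), (‖x‖ ^ c * ‖f x‖) ^ r) ^ (1 / r)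
      ≤ |p / ((n : ℝ) + p * (a - 1))| ^ δ *
        ((∫ x : EuclideanSpace ℝ (Fin n),
            (‖x‖ ^ a *
              Real.sqrt (∑ i, ‖fderiv ℝ f x (EuclideanSpace.single i (1 : ℝ))‖ ^ 2)) ^ p) ^ (1 / p)) ^ δ *
        ((∫ x : EuclideanSpace ℝ (Fin n), (‖x‖ ^ b * ‖f x‖) ^ q) ^ (1 / q)) ^ (1 - δ) := by
  have hp0 : (0:ℝ) < p := by linarith
  have hq0 : (0:ℝ) < q := by linarith
  have hna' : (n:ℝ) + p * (a - 1) ≠ 0 := by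
    intro h
    exact hna (by linear_combination h)
  have hhardy := aux_hardy hp hna' f hf hsupp h0
  have hK : IsCompact (tsupport f) := hsupp
  have hfc : Continuous f := hf.continuous
  have hf0 : f 0 = 0 := image_eq_zero_of_notMem_tsupport h0
  -- nonnegativity of the three integrals
  have hGnn : (0:ℝ) ≤ ∫ x : EuclideanSpace ℝ (Fin n), (‖x‖ ^ (a-1) * ‖f x‖) ^ p :=
    integral_nonneg fun x => by positivity
  have hAnn : (0:ℝ) ≤ ∫ x : EuclideanSpace ℝ (Fin n), (‖x‖ ^ a *
      Real.sqrt (∑ i, ‖fderiv ℝ f x (EuclideanSpace.single i (1:ℝ))‖ ^ 2)) ^ p :=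
    integral_nonneg fun x => by positivity
  have hBnn : (0:ℝ) ≤ ∫ x : EuclideanSpace ℝ (Fin n), (‖x‖ ^ b * ‖f x‖) ^ q :=
    integral_nonneg fun x => by positivity
  have hfsc : ∀ s : ℝ, 0 < s → Continuous fun x : EuclideanSpace ℝ (Fin n) => ‖f x‖ ^ s := by
    intro s hs
    rw [continuous_iff_continuousAt]
    intro x
    exact (Real.continuousAt_rpow_const _ _ (Or.inr (le_of_lt hs))).comp hfc.norm.continuousAt
  rcases eq_or_lt_of_le hδ0 with hδz | hδpos
  · -- δ = 0
    subst c
    rw [← hδz] at h1 ⊢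
    norm_num at h1 ⊢
    rw [div_eq_one_iff_eq (ne_of_gt hq0)] at h1
    subst h1
    exact le_refl _
  rcases eq_or_lt_of_le hδ1 with hδo | hδlt
  · -- δ = 1
    subst c
    rw [hδo] at h1 ⊢
    norm_num at h1 ⊢
    rw [div_eq_one_iff_eq (ne_of_gt hp0)] at h1
    subst h1
    simpa using hhardy
  -- 0 < δ < 1
  have hδr : (0:ℝ) < δ * r := mul_pos hδpos hr
  have hδr' : (0:ℝ) < (1 - δ) * r := mul_pos (by linarith) hr
  have ht1 : (0:ℝ) < δ * r / p := by positivity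
  have ht2 : (0:ℝ) < (1 - δ) * r / q := by positivity
  have ht1lt : δ * r / p < 1 := by linarith
  have ht2lt : (1 - δ) * r / q < 1 := by linarith
  have hδrp : δ * r < p := by
    rw [div_lt_one hp0] at ht1lt
    exact ht1lt
  have hδrq : (1 - δ) * r < q := by
    rw [div_lt_one hq0] at ht2lt
    exact ht2lt
  set P : ℝ := p / (δ * r) with hP
  set Q : ℝ := q / ((1 - δ) * r) with hQ
  have hPQ : Real.HolderConjugate P Q := by
    rw [Real.holderConjugate_iff]
    constructor
    · rw [hP, lt_div_iff₀ hδr]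
      linarith
    · rw [hP, hQ, inv_div, inv_div]
      exact h1
  have hmem1 : MemLp (fun x : EuclideanSpace ℝ (Fin n) => (‖x‖ ^ (a-1) * ‖f x‖) ^ (δ * r))
      (ENNReal.ofReal P) volume := by
    have heq : (fun x : EuclideanSpace ℝ (Fin n) => (‖x‖ ^ (a-1) * ‖f x‖) ^ (δ * r))
        = fun x => ‖x‖ ^ ((a-1) * (δ * r)) * ‖f x‖ ^ (δ * r) := by
      funext x
      rw [Real.mul_rpow (Real.rpow_nonneg (norm_nonneg x) _) (norm_nonneg (f x)),
        ← Real.rpow_mul (norm_nonneg x)]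
    rw [heq]
    apply aux_memLp hK h0
    · exact hfsc _ hδr
    · intro x hx
      simp [image_eq_zero_of_notMem_tsupport hx, Real.zero_rpow (ne_of_gt hδr)]
  have hmem2 : MemLp (fun x : EuclideanSpace ℝ (Fin n) => (‖x‖ ^ b * ‖f x‖) ^ ((1 - δ) * r))
      (ENNReal.ofReal Q) volume := by
    have heq : (fun x : EuclideanSpace ℝ (Fin n) => (‖x‖ ^ b * ‖f x‖) ^ ((1 - δ) * r))
        = fun x => ‖x‖ ^ (b * ((1 - δ) * r)) * ‖f x‖ ^ ((1 - δ) * r) := by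
      funext x
      rw [Real.mul_rpow (Real.rpow_nonneg (norm_nonneg x) _) (norm_nonneg (f x)),
        ← Real.rpow_mul (norm_nonneg x)]
    rw [heq]
    apply aux_memLp hK h0
    · exact hfsc _ hδr'
    · intro x hx
      simp [image_eq_zero_of_notMem_tsupport hx, Real.zero_rpow (ne_of_gt hδr')]
  have hholder := integral_mul_le_Lp_mul_Lq_of_nonneg hPQ
    (Filter.Eventually.of_forall fun x => Real.rpow_nonneg
      (mul_nonneg (Real.rpow_nonneg (norm_nonneg x) _) (norm_nonneg (f x))) _)
    (Filter.Eventually.of_forall fun x => Real.rpow_nonneg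
      (mul_nonneg (Real.rpow_nonneg (norm_nonneg x) _) (norm_nonneg (f x))) _)
    hmem1 hmem2
  -- identify the pieces
  have hLeq : ∫ x : EuclideanSpace ℝ (Fin n), (‖x‖ ^ c * ‖f x‖) ^ r
      = ∫ x : EuclideanSpace ℝ (Fin n),
        ((‖x‖ ^ (a-1) * ‖f x‖) ^ (δ * r)) * ((‖x‖ ^ b * ‖f x‖) ^ ((1 - δ) * r)) := by
    refine integral_congr_ae (Filter.Eventually.of_forall fun x => ?_)
    show (‖x‖ ^ c * ‖f x‖) ^ r
        = ((‖x‖ ^ (a-1) * ‖f x‖) ^ (δ * r)) * ((‖x‖ ^ b * ‖f x‖) ^ ((1 - δ) * r))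
    by_cases hfx : f x = 0
    · rw [hfx]
      simp [Real.zero_rpow (ne_of_gt hr), Real.zero_rpow (ne_of_gt hδr),
        Real.zero_rpow (ne_of_gt hδr')]
    · have hx0 : x ≠ 0 := by
        intro h
        rw [h, hf0] at hfx
        exact hfx rfl
      have hxp : (0:ℝ) < ‖x‖ := norm_pos_iff.2 hx0
      have hfp : (0:ℝ) < ‖f x‖ := norm_pos_iff.2 hfx
      rw [Real.mul_rpow (Real.rpow_nonneg (norm_nonneg x) _) (norm_nonneg (f x)),
        ← Real.rpow_mul (norm_nonneg x)]
      rw [Real.mul_rpow (Real.rpow_nonneg (norm_nonneg x) _) (norm_nonneg (f x)),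
        ← Real.rpow_mul (norm_nonneg x)]
      rw [Real.mul_rpow (Real.rpow_nonneg (norm_nonneg x) _) (norm_nonneg (f x)),
        ← Real.rpow_mul (norm_nonneg x)]
      rw [mul_mul_mul_comm, ← Real.rpow_add hxp, ← Real.rpow_add hfp]
      congr 1
      · congr 1
        rw [hc]
        ring
      · congr 1
        ring
  have hGP : ∫ x : EuclideanSpace ℝ (Fin n), ((‖x‖ ^ (a-1) * ‖f x‖) ^ (δ * r)) ^ P
      = ∫ x : EuclideanSpace ℝ (Fin n), (‖x‖ ^ (a-1) * ‖f x‖) ^ p := by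
    refine integral_congr_ae (Filter.Eventually.of_forall fun x => ?_)
    show ((‖x‖ ^ (a-1) * ‖f x‖) ^ (δ * r)) ^ P = (‖x‖ ^ (a-1) * ‖f x‖) ^ p
    rw [← Real.rpow_mul (mul_nonneg (Real.rpow_nonneg (norm_nonneg x) _) (norm_nonneg (f x)))]
    congr 1
    rw [hP]
    field_simp
  have hBQ : ∫ x : EuclideanSpace ℝ (Fin n), ((‖x‖ ^ b * ‖f x‖) ^ ((1 - δ) * r)) ^ Q
      = ∫ x : EuclideanSpace ℝ (Fin n), (‖x‖ ^ b * ‖f x‖) ^ q := by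
    refine integral_congr_ae (Filter.Eventually.of_forall fun x => ?_)
    show ((‖x‖ ^ b * ‖f x‖) ^ ((1 - δ) * r)) ^ Q = (‖x‖ ^ b * ‖f x‖) ^ q
    rw [← Real.rpow_mul (mul_nonneg (Real.rpow_nonneg (norm_nonneg x) _) (norm_nonneg (f x)))]
    congr 1
    rw [hQ]
    field_simp
  rw [hGP, hBQ] at hholder
  have hPinv : (1:ℝ)/P = δ * r / p := by rw [hP, one_div_div]
  have hQinv : (1:ℝ)/Q = (1 - δ) * r / q := by rw [hQ, one_div_div]
  rw [hPinv, hQinv] at hholder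
  rw [← hLeq] at hholder
  -- raise to power 1/r
  set G : ℝ := ∫ x : EuclideanSpace ℝ (Fin n), (‖x‖ ^ (a-1) * ‖f x‖) ^ p with hG
  set A : ℝ := ∫ x : EuclideanSpace ℝ (Fin n), (‖x‖ ^ a *
      Real.sqrt (∑ i, ‖fderiv ℝ f x (EuclideanSpace.single i (1:ℝ))‖ ^ 2)) ^ p with hA
  set B : ℝ := ∫ x : EuclideanSpace ℝ (Fin n), (‖x‖ ^ b * ‖f x‖) ^ q with hB
  have hLnn : (0:ℝ) ≤ ∫ x : EuclideanSpace ℝ (Fin n), (‖x‖ ^ c * ‖f x‖) ^ r :=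
    integral_nonneg fun x => by positivity
  have hstep1 : (∫ x : EuclideanSpace ℝ (Fin n), (‖x‖ ^ c * ‖f x‖) ^ r) ^ (1/r)
      ≤ (G ^ (δ * r / p) * B ^ ((1 - δ) * r / q)) ^ (1/r) :=
    Real.rpow_le_rpow hLnn hholder (by positivity)
  have hstep2 : (G ^ (δ * r / p) * B ^ ((1 - δ) * r / q)) ^ (1/r)
      = (G ^ (1/p)) ^ δ * (B ^ (1/q)) ^ (1 - δ) := by
    rw [Real.mul_rpow (Real.rpow_nonneg hGnn _) (Real.rpow_nonneg hBnn _)]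
    rw [← Real.rpow_mul hGnn, ← Real.rpow_mul hBnn]
    rw [show δ * r / p * (1/r) = 1/p * δ by field_simp,
      show (1 - δ) * r / q * (1/r) = 1/q * (1 - δ) by field_simp]
    rw [Real.rpow_mul hGnn, Real.rpow_mul hBnn]
  have hstep3 : (G ^ (1/p)) ^ δ
      ≤ (|p / ((n:ℝ) + p * (a-1))| * A ^ (1/p)) ^ δ :=
    Real.rpow_le_rpow (Real.rpow_nonneg hGnn _) hhardy (le_of_lt hδpos)
  have hstep4 : (|p / ((n:ℝ) + p * (a-1))| * A ^ (1/p)) ^ δ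
      = |p / ((n:ℝ) + p * (a-1))| ^ δ * (A ^ (1/p)) ^ δ :=
    Real.mul_rpow (abs_nonneg _) (Real.rpow_nonneg hAnn _)
  calc (∫ x : EuclideanSpace ℝ (Fin n), (‖x‖ ^ c * ‖f x‖) ^ r) ^ (1/r)
      ≤ (G ^ (1/p)) ^ δ * (B ^ (1/q)) ^ (1 - δ) := by rw [← hstep2]; exact hstep1
    _ ≤ (|p / ((n:ℝ) + p * (a-1))| * A ^ (1/p)) ^ δ * (B ^ (1/q)) ^ (1 - δ) :=
        mul_le_mul_of_nonneg_right hstep3 (Real.rpow_nonneg (Real.rpow_nonneg hBnn _) _)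
    _ = |p / ((n:ℝ) + p * (a-1))| ^ δ * (A ^ (1/p)) ^ δ * (B ^ (1/q)) ^ (1 - δ) := by
        rw [hstep4]
end
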